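/- arXiv:2112.01893 — 6 statements merged into one kernel-verified Lean document; each statement's English description precedes it below -/
import Mathlib

section
/- Let g1 : [0,∞) → ℝ be Lebesgue integrable and let g2 : [0,∞) → ℝ have finite total variation V(g2) on [0,∞) and satisfy lim_{t→∞} g2(t) = 0. Define the convolution h(t) := ∫_0^t g1(s) g2(t−s) ds for t ≥ 0. Then h has finite total variation on [0,∞) and V(h) ≤ 2 · V(g2) · ∫_0^∞ |g1(s)| ds. -/
/-!
Extend `g₂` by zero to `G := 1_{[0,∞)} g₂`. Then `h(t) = ∫_{(0,∞)} g₁(s) G(t - s) ds`, so every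
increment of `h` along a partition is an average, against `|g₁|`, of increments of `G` along
the shifted partition. Hence `V(h) ≤ V(G) ∫ |g₁|`, and `V(G) = |g₂(0)| + V(g₂) ≤ 2 V(g₂)`, the
jump at `0` being controlled by `g₂ → 0` at infinity.
-/

open MeasureTheory Filter Set
open scoped ENNReal Topology

theorem edist_le_eVariationOn_of_tendsto {α E : Type*} [LinearOrder α] [PseudoEMetricSpace E]
    {f : α → E} {s : Set α} {x : α} {l : Filter α} [l.NeBot] {y : E} (hx : x ∈ s)
    (hf : Tendsto f l (𝓝 y)) (hl : ∀ᶠ t in l, t ∈ s) :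
    edist (f x) y ≤ eVariationOn f s :=
  le_of_tendsto (tendsto_const_nhds.edist hf) <| hl.mono fun _ ht ↦ eVariationOn.edist_le f hx ht

theorem eVariationOn_indicator_Ici {E : Type*} [PseudoEMetricSpace E] [Zero E] (g : ℝ → E)
    (a : ℝ) : eVariationOn ((Ici a).indicator g) univ = edist (g a) 0 + eVariationOn g (Ici a) := by
  have hleft : eVariationOn ((Ici a).indicator g) (Iic a) = edist (g a) 0 := by
    have hzero : EqOn ((Ici a).indicator g) (fun _ ↦ 0) (Iio a) := fun t ht ↦
      indicator_of_notMem (not_le.2 ht) g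
    have hconst : eVariationOn (fun _ : ℝ ↦ (0 : E)) (Iio a) = 0 :=
      eVariationOn.constant_on
        (subsingleton_singleton.anti (image_subset_iff.2 fun _ _ ↦ rfl))
    have := eVariationOn.eVariationOn_on_inter_Iic_eq_Iio_add_edist (f := (Ici a).indicator g)
      (s := univ) (a := a) (l := 0) (by simpa using nhdsLT_neBot a) trivial
      (tendsto_const_nhds.congr' (by simpa using (eventuallyEq_nhdsWithin_of_eqOn hzero).symm))
    simpa [eVariationOn.congr hzero, hconst] using this
  rw [← Iic_union_Ici, eVariationOn.union _ isGreatest_Iic isLeast_Ici, hleft,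
    eVariationOn.congr fun t ht ↦ indicator_of_mem ht g]

theorem LocallyBoundedVariationOn.measurable {f : ℝ → ℝ} (hf : LocallyBoundedVariationOn f univ) :
    Measurable f := by
  obtain ⟨p, q, hp, hq, rfl⟩ := hf.exists_monotoneOn_sub_monotoneOn
  exact (monotoneOn_univ.1 hp).measurable.sub (monotoneOn_univ.1 hq).measurable

section Convolution

variable {μ : Measure ℝ} {k G : ℝ → ℝ}

theorem MeasureTheory.Integrable.mul_comp_sub_of_boundedVariationOn (hk : Integrable k μ)
    (hG : BoundedVariationOn G univ) (t : ℝ) : Integrable (fun x ↦ k x * G (t - x)) μ := by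
  refine hk.mul_bdd (c := ‖G 0‖ + (eVariationOn G univ).toReal)
    ((hG.locallyBoundedVariationOn.measurable.comp (measurable_const_sub t)).aestronglyMeasurable)
    (ae_of_all _ fun x ↦ ?_)
  calc ‖G (t - x)‖ ≤ ‖G 0‖ + dist (G (t - x)) (G 0) := norm_le_norm_add_const_of_dist_le le_rfl
    _ ≤ ‖G 0‖ + (eVariationOn G univ).toReal := by gcongr; exact hG.dist_le trivial trivial

theorem eVariationOn_integral_mul_comp_sub_le (hk : Integrable k μ)
    (hG : BoundedVariationOn G univ) (s : Set ℝ) :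
    eVariationOn (fun t ↦ ∫ x, k x * G (t - x) ∂μ) s ≤
      (∫⁻ x, ‖k x‖ₑ ∂μ) * eVariationOn G univ := by
  refine iSup_le fun ⟨n, u, hu, _⟩ ↦ ?_
  have hGm := hG.locallyBoundedVariationOn.measurable
  have hstep : ∀ i, edist (∫ x, k x * G (u (i + 1) - x) ∂μ) (∫ x, k x * G (u i - x) ∂μ) ≤
      ∫⁻ x, ‖k x‖ₑ * edist (G (u (i + 1) - x)) (G (u i - x)) ∂μ := by
    intro i
    rw [edist_eq_enorm_sub, ← integral_sub (hk.mul_comp_sub_of_boundedVariationOn hG _)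
      (hk.mul_comp_sub_of_boundedVariationOn hG _)]
    refine (enorm_integral_le_lintegral_enorm _).trans_eq (lintegral_congr fun x ↦ ?_)
    rw [← mul_sub, enorm_mul, edist_eq_enorm_sub]
  have hshift : ∀ x, ∑ i ∈ Finset.range n, edist (G (u (i + 1) - x)) (G (u i - x)) ≤
      eVariationOn G univ :=
    fun x ↦ eVariationOn.sum_le (fun i j hij ↦ sub_le_sub_right (hu hij) x) fun _ ↦ trivial
  calc ∑ i ∈ Finset.range n, edist (∫ x, k x * G (u (i + 1) - x) ∂μ) (∫ x, k x * G (u i - x) ∂μ)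
      ≤ ∑ i ∈ Finset.range n, ∫⁻ x, ‖k x‖ₑ * edist (G (u (i + 1) - x)) (G (u i - x)) ∂μ :=
        Finset.sum_le_sum fun i _ ↦ hstep i
    _ = ∫⁻ x, ‖k x‖ₑ * ∑ i ∈ Finset.range n, edist (G (u (i + 1) - x)) (G (u i - x)) ∂μ := by
        simp_rw [Finset.mul_sum]
        refine (lintegral_finsetSum' _ fun i _ ↦ ?_).symm
        exact hk.aemeasurable.enorm.mul ((hGm.comp (measurable_const_sub _)).edist
          (hGm.comp (measurable_const_sub _))).aemeasurable
    _ ≤ ∫⁻ x, ‖k x‖ₑ * eVariationOn G univ ∂μ := by gcongr with x; exact hshift x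
    _ = (∫⁻ x, ‖k x‖ₑ ∂μ) * eVariationOn G univ := lintegral_mul_const' _ _ hG

end Convolution

theorem intervalIntegral_mul_comp_sub_eq_setIntegral_indicator (g1 g2 : ℝ → ℝ) {t : ℝ}
    (ht : 0 ≤ t) :
    ∫ s in (0:ℝ)..t, g1 s * g2 (t - s) = ∫ s in Ioi 0, g1 s * (Ici 0).indicator g2 (t - s) := by
  have hcut : EqOn (fun s ↦ g1 s * (Ici 0).indicator g2 (t - s))
      ((Ioc 0 t).indicator fun s ↦ g1 s * g2 (t - s)) (Ioi 0) := by
    intro s hs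
    by_cases hst : s ≤ t
    · have hts : t - s ∈ Ici 0 := sub_nonneg.2 hst
      simp only [indicator_of_mem (show s ∈ Ioc 0 t from ⟨hs, hst⟩), indicator_of_mem hts]
    · simp [hst, sub_nonneg]
  rw [setIntegral_congr_fun measurableSet_Ioi hcut, setIntegral_indicator measurableSet_Ioc,
    inter_eq_self_of_subset_right Ioc_subset_Ioi_self, intervalIntegral.integral_of_le ht]

/-- If `g₁` is Lebesgue integrable on `[0,∞)` and `g₂` has finite total
variation on `[0,∞)` with `g₂(t) → 0` as `t → ∞`, then the convolution
`h(t) = ∫_0^t g₁(s) g₂(t-s) ds` has finite total variation on `[0,∞)` and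
`V(h) ≤ 2 · V(g₂) · ∫_0^∞ |g₁(s)| ds`. -/
theorem stmt_0 (g1 g2 : ℝ → ℝ)
    (hg1 : IntegrableOn g1 (Set.Ici (0:ℝ)))
    (hg2var : eVariationOn g2 (Set.Ici (0:ℝ)) ≠ ⊤)
    (hg2lim : Tendsto g2 atTop (nhds 0)) :
    eVariationOn (fun t => ∫ s in (0:ℝ)..t, g1 s * g2 (t - s)) (Set.Ici (0:ℝ)) ≠ ⊤ ∧
    eVariationOn (fun t => ∫ s in (0:ℝ)..t, g1 s * g2 (t - s)) (Set.Ici (0:ℝ)) ≤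
      2 * eVariationOn g2 (Set.Ici (0:ℝ)) *
        ENNReal.ofReal (∫ s in Set.Ioi (0:ℝ), |g1 s|) := by
  have hGvar : eVariationOn ((Ici 0).indicator g2) univ ≤ 2 * eVariationOn g2 (Ici 0) := by
    rw [eVariationOn_indicator_Ici, two_mul]
    gcongr
    exact edist_le_eVariationOn_of_tendsto self_mem_Ici hg2lim (eventually_ge_atTop 0)
  have hG : BoundedVariationOn ((Ici 0).indicator g2) univ :=
    ne_top_of_le_ne_top (by finiteness) hGvar
  have hg1' : Integrable g1 (volume.restrict (Ioi 0)) := hg1.mono_set Ioi_subset_Ici_self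
  have hbound : eVariationOn (fun t => ∫ s in (0:ℝ)..t, g1 s * g2 (t - s)) (Ici 0) ≤
      2 * eVariationOn g2 (Ici 0) * ENNReal.ofReal (∫ s in Ioi 0, |g1 s|) :=
    calc _ = eVariationOn (fun t ↦ ∫ s in Ioi 0, g1 s * (Ici 0).indicator g2 (t - s)) (Ici 0) :=
          eVariationOn.congr fun t ht ↦
            intervalIntegral_mul_comp_sub_eq_setIntegral_indicator g1 g2 ht
      _ ≤ (∫⁻ s in Ioi 0, ‖g1 s‖ₑ) * eVariationOn ((Ici 0).indicator g2) univ :=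
          eVariationOn_integral_mul_comp_sub_le hg1' hG _
      _ ≤ ENNReal.ofReal (∫ s in Ioi 0, |g1 s|) * (2 * eVariationOn g2 (Ici 0)) := by
          rw [← ofReal_integral_norm_eq_lintegral_enorm hg1']
          simp only [Real.norm_eq_abs]
          gcongr
      _ = _ := mul_comm _ _
  exact ⟨ne_top_of_le_ne_top (by finiteness) hbound, hbound⟩
end

section
/- Let (Z_i)_{i≥1} be i.i.d. strictly positive random variables with μ := E Z_1 < ∞ and lim_{x→∞} x^α P(Z_1 > x) = c_Z for some α ∈ (1,2) and c_Z > 0. Set S_n := Z_1 + ⋯ + Z_n (S_0 := 0) and N(t) := #{n ≥ 1 : S_n ≤ t}. Then for every κ ∈ (1/α, 1), lim_{λ→∞} sup_{u > λ^κ} (u^α / (λ + u)) · P( N(λ) − λ/μ > u/μ ) = 0. -/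
open MeasureTheory ProbabilityTheory Filter Set Asymptotics
open scoped Topology

/-!
On the event `N(λ) - λ/μ > u/μ` the `n`-th partial sum with `n = ⌊(λ + u)/μ⌋ + 1` is at most `λ`,
so a Chernoff bound at a negative argument controls the probability. As `Z` may have infinite
variance, the quadratic bound on `E e^{-sZ}` is replaced by a `β`-th moment one: the tail
hypothesis gives `E Z^β < ∞` for all `β < α`, and for `1 ≤ β ≤ 2` the inequality `e^{-y} ≤ 1 - y + y^β` yields `E e^{-sZ} ≤ exp(-sμ + s^β E Z^β)`. Taking
`β ∈ (1/κ, α)` and `s` of order `u^{-(1/κ - 1)/(β - 1)}` (using `λ < u^{1/κ}`) bounds the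
probability by `exp(-c u^ρ)` with `ρ = (β - 1/κ)/(β - 1) > 0`, which beats the polynomial factor
`u^α/(λ + u) ≤ u^{α - 1}`.
-/

lemma Real.exp_neg_le_one_sub_add_rpow {β y : ℝ} (hβ1 : 1 ≤ β) (hβ2 : β ≤ 2)
    (hy : 0 ≤ y) : Real.exp (-y) ≤ 1 - y + y ^ β := by
  rcases le_total y 1 with hy1 | hy1
  · have hsq : y ^ 2 ≤ y ^ β := by
      simpa using Real.rpow_le_rpow_of_exponent_ge' hy hy1 (by linarith) hβ2
    have hinv : Real.exp (-y) * (1 + y) ≤ 1 := by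
      calc Real.exp (-y) * (1 + y) ≤ Real.exp (-y) * Real.exp y := by
            gcongr; linarith [Real.add_one_le_exp y]
        _ = 1 := by rw [← Real.exp_add, neg_add_cancel, Real.exp_zero]
    nlinarith [Real.exp_pos (-y), pow_nonneg hy 3]
  · have hy_le : y ≤ y ^ β := by
      simpa using Real.rpow_le_rpow_of_exponent_le hy1 hβ1
    linarith [Real.exp_le_one_iff.2 (neg_nonpos.2 hy)]

lemma integral_pos_of_ae_pos {α : Type*} [MeasurableSpace α] {μ : Measure α} [NeZero μ]
    {f : α → ℝ} (hf : ∀ᵐ x ∂μ, 0 < f x) (hfi : Integrable f μ) :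
    0 < ∫ x, f x ∂μ := by
  rw [integral_pos_iff_support_of_nonneg_ae (hf.mono fun _ h => h.le) hfi, pos_iff_ne_zero]
  intro h0
  have : ∀ᵐ x ∂μ, False := by
    filter_upwards [hf, measure_eq_zero_iff_ae_notMem.1 h0] with x hx hx'
    exact hx' hx.ne'
  exact NeZero.ne μ (ae_eq_bot.1 (eventually_false_iff_eq_bot.1 this))

lemma tendsto_rpow_mul_exp_neg_mul_rpow_atTop_nhds_zero (a : ℝ) {b ρ : ℝ} (hb : 0 < b)
    (hρ : 0 < ρ) : Tendsto (fun x : ℝ => x ^ a * Real.exp (-b * x ^ ρ)) atTop (𝓝 0) := by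
  refine ((tendsto_rpow_mul_exp_neg_mul_atTop_nhds_zero (a / ρ) b hb).comp
    (tendsto_rpow_atTop hρ)).congr' ?_
  filter_upwards [eventually_gt_atTop 0] with x hx
  rw [Function.comp_apply, ← Real.rpow_mul hx.le, mul_div_cancel₀ _ hρ.ne']

lemma Real.rpow_div_add_le_rpow_sub_one (α : ℝ) {x y : ℝ} (hx : 0 ≤ x) (hy : 0 < y) :
    y ^ α / (x + y) ≤ y ^ (α - 1) := by
  rw [Real.rpow_sub_one hy.ne']
  exact div_le_div_of_nonneg_left (by positivity) hy (by linarith)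

lemma isBigO_rpow_neg_of_tendsto_rpow_mul {f : ℝ → ℝ} {α c : ℝ}
    (h : Tendsto (fun x => x ^ α * f x) atTop (𝓝 c)) : f =O[atTop] fun x => x ^ (-α) := by
  have := (h.isBigO_one ℝ).mul (isBigO_refl (fun x : ℝ => x ^ (-α)) atTop)
  refine this.congr' ?_ (Eventually.of_forall fun x => one_mul _)
  filter_upwards [eventually_gt_atTop 0] with x hx
  rw [mul_comm, ← mul_assoc, ← Real.rpow_add hx, neg_add_cancel, Real.rpow_zero, one_mul]

section

variable {Ω : Type*} [MeasurableSpace Ω] {P : Measure Ω}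

lemma integrable_rpow_of_isBigO_measure_lt [IsFiniteMeasure P] {X : Ω → ℝ}
    (hX : AEMeasurable X P) (hX0 : 0 ≤ᵐ[P] X) {α β : ℝ} (hβ : 0 < β) (hβα : β < α)
    (htail : (fun t => (P {ω | t < X ω}).toReal) =O[atTop] fun t => t ^ (-α)) :
    Integrable (fun ω => X ω ^ β) P := by
  obtain ⟨C, hC⟩ := htail.bound
  obtain ⟨x₁, hx₁⟩ := eventually_atTop.1 hC
  set x₀ := max x₁ 1
  have hx₀ : 0 < x₀ := zero_lt_one.trans_le (le_max_right _ _)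
  have hfar : ∀ t ∈ Ioi x₀, P {ω | t < X ω} * ENNReal.ofReal (t ^ (β - 1)) ≤
      ENNReal.ofReal (C * t ^ (β - 1 - α)) := by
    intro t ht
    have ht0 : 0 < t := hx₀.trans ht
    have hPt : (P {ω | t < X ω}).toReal ≤ C * t ^ (-α) := by
      simpa [abs_of_nonneg (Real.rpow_nonneg ht0.le _)] using
        hx₁ t ((le_max_left _ _).trans ht.le)
    calc P {ω | t < X ω} * ENNReal.ofReal (t ^ (β - 1))
        ≤ ENNReal.ofReal (C * t ^ (-α)) * ENNReal.ofReal (t ^ (β - 1)) := by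
          gcongr
          exact ENNReal.le_ofReal_iff_toReal_le (measure_ne_top _ _)
            ((ENNReal.toReal_nonneg).trans hPt) |>.2 hPt
      _ = ENNReal.ofReal (C * t ^ (β - 1 - α)) := by
          rw [← ENNReal.ofReal_mul' (Real.rpow_nonneg ht0.le _), mul_assoc,
            ← Real.rpow_add ht0]
          ring_nf
  refine ⟨(hX.pow_const β).aestronglyMeasurable, ?_⟩
  rw [hasFiniteIntegral_iff_ofReal (hX0.mono fun ω h => Real.rpow_nonneg h β),
    lintegral_rpow_eq_lintegral_meas_lt_mul P hX0 hX hβ, ← Ioc_union_Ioi_eq_Ioi hx₀.le]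
  refine ENNReal.mul_lt_top ENNReal.ofReal_lt_top
    ((lintegral_union_le _ _ _).trans_lt (ENNReal.add_lt_top.2 ⟨?_, ?_⟩))
  · have hnear : IntegrableOn (fun t : ℝ => t ^ (β - 1)) (Ioc 0 x₀) := by
      rw [← uIoc_of_le hx₀.le, ← intervalIntegrable_iff]
      exact intervalIntegral.intervalIntegrable_rpow' (by linarith)
    calc ∫⁻ t in Ioc 0 x₀, P {ω | t < X ω} * ENNReal.ofReal (t ^ (β - 1))
        ≤ ∫⁻ t in Ioc 0 x₀, P univ * ENNReal.ofReal (t ^ (β - 1)) := by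
          gcongr; exact subset_univ _
      _ < ⊤ := by
          rw [lintegral_const_mul' _ _ (measure_ne_top _ _)]
          exact ENNReal.mul_lt_top (measure_lt_top _ _) hnear.lintegral_lt_top
  · exact (setLIntegral_mono' measurableSet_Ioi hfar).trans_lt
      ((integrableOn_Ioi_rpow_of_lt (by linarith) hx₀).const_mul C).lintegral_lt_top

lemma integrable_exp_neg_mul_of_nonneg [IsFiniteMeasure P] {X : Ω → ℝ}
    (hX : AEMeasurable X P) (hX0 : ∀ᵐ ω ∂P, 0 ≤ X ω) {s : ℝ} (hs : 0 ≤ s) :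
    Integrable (fun ω => Real.exp (-s * X ω)) P := by
  refine Integrable.mono' (integrable_const 1) (by fun_prop) ?_
  filter_upwards [hX0] with ω hω
  rw [Real.norm_eq_abs, abs_of_pos (Real.exp_pos _), Real.exp_le_one_iff]
  nlinarith

lemma mgf_neg_le_exp_of_nonneg [IsProbabilityMeasure P] {X : Ω → ℝ} (hX0 : ∀ᵐ ω ∂P, 0 ≤ X ω)
    (hX : Integrable X P) {β : ℝ} (hβ1 : 1 ≤ β) (hβ2 : β ≤ 2)
    (hXβ : Integrable (fun ω => X ω ^ β) P) {s : ℝ} (hs : 0 ≤ s) :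
    mgf X P (-s) ≤ Real.exp (-(s * ∫ ω, X ω ∂P) + s ^ β * ∫ ω, X ω ^ β ∂P) := by
  have hpoint : ∀ᵐ ω ∂P, Real.exp (-s * X ω) ≤ 1 - s * X ω + s ^ β * X ω ^ β := by
    filter_upwards [hX0] with ω hω
    rw [neg_mul, ← Real.mul_rpow hs hω]
    exact Real.exp_neg_le_one_sub_add_rpow hβ1 hβ2 (mul_nonneg hs hω)
  have hlin : Integrable (fun ω => 1 - s * X ω) P := (integrable_const 1).sub (hX.const_mul s)
  calc mgf X P (-s) ≤ ∫ ω, (1 - s * X ω + s ^ β * X ω ^ β) ∂P :=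
        integral_mono_ae (integrable_exp_neg_mul_of_nonneg hX.aemeasurable hX0 hs)
          (hlin.add (hXβ.const_mul _)) hpoint
    _ = 1 + (-(s * ∫ ω, X ω ∂P) + s ^ β * ∫ ω, X ω ^ β ∂P) := by
        rw [integral_add hlin (hXβ.const_mul _), integral_sub (integrable_const 1)
          (hX.const_mul s), integral_const, integral_const_mul, integral_const_mul]
        simp only [probReal_univ, smul_eq_mul, one_mul]
        ring
    _ ≤ _ := by linarith [Real.add_one_le_exp (-(s * ∫ ω, X ω ∂P) + s ^ β * ∫ ω, X ω ^ β ∂P)]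

lemma measureReal_sum_range_le_le_exp_mul_mgf_pow [IsProbabilityMeasure P] {Z : ℕ → Ω → ℝ}
    (hmeas : ∀ i, Measurable (Z i)) (hindep : iIndepFun Z P)
    (hident : ∀ i, IdentDistrib (Z i) (Z 0) P P) (hZ0 : ∀ i, ∀ᵐ ω ∂P, 0 ≤ Z i ω)
    {s : ℝ} (hs : 0 ≤ s) (n : ℕ) (lam : ℝ) :
    P.real {ω | ∑ i ∈ Finset.range n, Z i ω ≤ lam} ≤
      Real.exp (s * lam) * mgf (Z 0) P (-s) ^ n := by
  have hsum0 : ∀ᵐ ω ∂P, 0 ≤ (∑ i ∈ Finset.range n, Z i) ω := by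
    filter_upwards [ae_all_iff.2 hZ0] with ω hω
    simpa only [Finset.sum_apply] using Finset.sum_nonneg fun i _ => hω i
  have hchernoff := measure_le_le_exp_mul_mgf lam (neg_nonpos.2 hs)
    (integrable_exp_neg_mul_of_nonneg (by fun_prop) hsum0 hs)
  rw [hindep.mgf_sum hmeas, Finset.prod_eq_pow_card
    fun i _ => mgf_congr_of_identDistrib _ _ (hident i) _, Finset.card_range, neg_neg]
    at hchernoff
  simpa only [Finset.sum_apply] using hchernoff

-- `N(t)` for the partial sums of `z`; note that `Set.ncard` is `0` on infinite sets.
noncomputable def renewalCount (z : ℕ → ℝ) (t : ℝ) : ℕ :=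
  {n : ℕ | 1 ≤ n ∧ ∑ i ∈ Finset.range n, z i ≤ t}.ncard

lemma sum_range_le_of_le_renewalCount {z : ℕ → ℝ} (hz : ∀ i, 0 ≤ z i) {t : ℝ} {n : ℕ}
    (hn : 0 < n) (h : n ≤ renewalCount z t) : ∑ i ∈ Finset.range n, z i ≤ t := by
  by_contra! hlt
  have hsub : {k : ℕ | 1 ≤ k ∧ ∑ i ∈ Finset.range k, z i ≤ t} ⊆ Ico 1 n := by
    refine fun k ⟨hk1, hk⟩ => ⟨hk1, not_le.1 fun hnk => hlt.not_ge (hk.trans' ?_)⟩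
    exact Finset.sum_le_sum_of_subset_of_nonneg (Finset.range_subset_range.2 hnk)
      fun i _ _ => hz i
  have := Set.ncard_le_ncard hsub (finite_Ico 1 n)
  rw [ncard_Ico_nat] at this
  exact absurd (h.trans this) (by omega)

lemma measureReal_renewalCount_gt_le_exp [IsProbabilityMeasure P] {Z : ℕ → Ω → ℝ}
    (hmeas : ∀ i, Measurable (Z i)) (hindep : iIndepFun Z P)
    (hident : ∀ i, IdentDistrib (Z i) (Z 0) P P) (hZ0 : ∀ i, ∀ᵐ ω ∂P, 0 ≤ Z i ω)
    (hint : Integrable (Z 0) P) {β : ℝ} (hβ1 : 1 ≤ β) (hβ2 : β ≤ 2)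
    (hintβ : Integrable (fun ω => Z 0 ω ^ β) P) {μ : ℝ} (hμ : μ = ∫ ω, Z 0 ω ∂P) (hμ0 : 0 < μ)
    {lam u s : ℝ} (hlam : 0 ≤ lam) (hu : 0 < u) (hs : 0 ≤ s)
    (hsK : s ^ (β - 1) * ∫ ω, Z 0 ω ^ β ∂P ≤ μ * u / (2 * (lam + u))) :
    P.real {ω | u / μ < (renewalCount (fun i => Z i ω) lam : ℝ) - lam / μ} ≤
      Real.exp (-(s * u / 2)) := by
  set K := ∫ ω, Z 0 ω ^ β ∂P
  set x := (lam + u) / μ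
  set n := ⌊x⌋₊ + 1
  have hx0 : 0 ≤ x := by positivity
  have hxn : x ≤ n := by simpa [n] using (Nat.lt_floor_add_one x).le
  have hevent : {ω | u / μ < (renewalCount (fun i => Z i ω) lam : ℝ) - lam / μ} ≤ᵐ[P]
      {ω | ∑ i ∈ Finset.range n, Z i ω ≤ lam} := by
    filter_upwards [ae_all_iff.2 hZ0] with ω hω hN
    refine sum_range_le_of_le_renewalCount hω (Nat.succ_pos ⌊x⌋₊) ((Nat.floor_lt hx0).2 ?_)
    have hN : u / μ < (renewalCount (fun i => Z i ω) lam : ℝ) - lam / μ := hN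
    have hx : x = lam / μ + u / μ := add_div lam u μ
    linarith
  have hexponent : s * lam + n * (-(s * μ) + s ^ β * K) ≤ -(s * u / 2) := by
    have hsβ : s ^ β = s * s ^ (β - 1) := by
      rw [← Real.rpow_one_add' hs (by linarith), add_sub_cancel]
    have hsK' : s ^ (β - 1) * K * (lam + u) ≤ μ * u / 2 := by
      linarith [(le_div_iff₀ (by positivity)).1 hsK]
    have hxμ : x * μ = lam + u := div_mul_cancel₀ _ hμ0.ne'
    have hgap : 0 ≤ s * (μ - s ^ (β - 1) * K) := by
      refine mul_nonneg hs ?_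
      nlinarith
    -- the exponent is `s * lam - n * s * (μ - s ^ (β - 1) * K)`, decreasing in `n`
    rw [hsβ]
    nlinarith [mul_le_mul_of_nonneg_right hxn hgap]
  calc P.real {ω | u / μ < (renewalCount (fun i => Z i ω) lam : ℝ) - lam / μ}
      ≤ P.real {ω | ∑ i ∈ Finset.range n, Z i ω ≤ lam} :=
        ENNReal.toReal_mono (measure_ne_top _ _) (measure_mono_ae hevent)
    _ ≤ Real.exp (s * lam) * mgf (Z 0) P (-s) ^ n :=
        measureReal_sum_range_le_le_exp_mul_mgf_pow hmeas hindep hident hZ0 hs n lam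
    _ ≤ Real.exp (s * lam) * Real.exp (-(s * μ) + s ^ β * K) ^ n := by
        gcongr
        · exact mgf_nonneg
        · exact hμ ▸ mgf_neg_le_exp_of_nonneg (hZ0 0) hint hβ1 hβ2 hintβ hs
    _ = Real.exp (s * lam + n * (-(s * μ) + s ^ β * K)) := by
        rw [← Real.exp_nat_mul, ← Real.exp_add]
    _ ≤ Real.exp (-(s * u / 2)) := Real.exp_le_exp.2 hexponent

lemma exists_measureReal_renewalCount_gt_le_exp_neg_rpow [IsProbabilityMeasure P]
    {Z : ℕ → Ω → ℝ} (hmeas : ∀ i, Measurable (Z i)) (hindep : iIndepFun Z P)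
    (hident : ∀ i, IdentDistrib (Z i) (Z 0) P P) (hpos : ∀ i, ∀ᵐ ω ∂P, 0 < Z i ω)
    (hint : Integrable (Z 0) P) {β : ℝ} (hβ1 : 1 < β) (hβ2 : β ≤ 2)
    (hintβ : Integrable (fun ω => Z 0 ω ^ β) P) {μ : ℝ} (hμ : μ = ∫ ω, Z 0 ω ∂P)
    {κ : ℝ} (hκ0 : 0 < κ) (hκ1 : κ ≤ 1) :
    ∃ c > 0, ∀ lam ≥ 0, ∀ u ≥ 1, lam ^ κ < u →
      P.real {ω | u / μ < (renewalCount (fun i => Z i ω) lam : ℝ) - lam / μ} ≤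
        Real.exp (-c * u ^ ((β - 1 / κ) / (β - 1))) := by
  have hμ0 : 0 < μ := hμ ▸ integral_pos_of_ae_pos (hpos 0) hint
  set K := ∫ ω, Z 0 ω ^ β ∂P
  have hK0 : 0 < K :=
    integral_pos_of_ae_pos ((hpos 0).mono fun _ h => Real.rpow_pos_of_pos h β) hintβ
  set ρ := (β - 1 / κ) / (β - 1)
  set c := (μ / (4 * K)) ^ (1 / (β - 1))
  have hc : 0 < c := by positivity
  refine ⟨c / 2, by positivity, fun lam hlam u hu1 hu => ?_⟩
  have hu0 : 0 < u := one_pos.trans_le hu1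
  -- `s ^ (β - 1) * K` is of order `u ^ (1 - 1 / κ)`, small enough since `lam < u ^ (1 / κ)`
  set s := c * u ^ (ρ - 1)
  have hsu : s * u = c * u ^ ρ := by
    simp only [s]; rw [Real.rpow_sub_one hu0.ne', mul_assoc, div_mul_cancel₀ _ hu0.ne']
  have hsK : s ^ (β - 1) * K = μ * u / (4 * u ^ (1 / κ)) := by
    have hρβ : (ρ - 1) * (β - 1) = 1 - 1 / κ := by
      have hβ : β - 1 ≠ 0 := by linarith
      simp only [ρ]; rw [div_sub_one hβ, div_mul_cancel₀ _ hβ]; ring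
    rw [Real.mul_rpow hc.le (by positivity), ← Real.rpow_mul (by positivity),
      ← Real.rpow_mul hu0.le, one_div_mul_cancel (by linarith), Real.rpow_one, hρβ,
      Real.rpow_sub hu0, Real.rpow_one]
    field_simp
  have hadd : lam + u ≤ 2 * u ^ (1 / κ) := by
    have hlam_le : lam ≤ u ^ (1 / κ) := by
      calc lam = (lam ^ κ) ^ (1 / κ) := by rw [one_div, Real.rpow_rpow_inv hlam hκ0.ne']
        _ ≤ u ^ (1 / κ) := by gcongr
    have hu_le : u ≤ u ^ (1 / κ) := by
      simpa using Real.rpow_le_rpow_of_exponent_le hu1 ((one_le_div hκ0).2 hκ1)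
    linarith
  calc P.real {ω | u / μ < (renewalCount (fun i => Z i ω) lam : ℝ) - lam / μ}
      ≤ Real.exp (-(s * u / 2)) := by
        refine measureReal_renewalCount_gt_le_exp hmeas hindep hident
          (fun i => (hpos i).mono fun _ h => h.le) hint hβ1.le hβ2 hintβ hμ hμ0 hlam hu0
          (by positivity) (hsK ▸ div_le_div_of_nonneg_left (by positivity) (by positivity) ?_)
        linarith
    _ = Real.exp (-(c / 2) * u ^ ρ) := by rw [hsu]; ring_nf

end

theorem stmt_2_general {Ω : Type*} [MeasurableSpace Ω] (P : Measure Ω) [IsProbabilityMeasure P]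
    (Z : ℕ → Ω → ℝ) (hmeas : ∀ i, Measurable (Z i))
    (hindep : iIndepFun Z P)
    (hident : ∀ i, IdentDistrib (Z i) (Z 0) P P)
    (hpos : ∀ i, ∀ᵐ ω ∂P, 0 < Z i ω)
    (hint : Integrable (Z 0) P)
    (μ : ℝ) (hμ : μ = ∫ ω, Z 0 ω ∂P)
    (α c_Z : ℝ) (hα1 : 1 < α) (hα2 : α < 2)
    (htail : Tendsto (fun x : ℝ => x ^ α * (P {ω | x < Z 0 ω}).toReal) atTop (nhds c_Z))
    (κ : ℝ) (hκ1 : 1 / α < κ) (hκ2 : κ < 1) :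
    ∀ ε > (0:ℝ), ∃ Λ : ℝ, ∀ lam ≥ Λ, ∀ u : ℝ, lam ^ κ < u →
      u ^ α / (lam + u) *
        (P {ω | u / μ <
          ((Set.ncard {n : ℕ | 1 ≤ n ∧ ∑ i ∈ Finset.range n, Z i ω ≤ lam} : ℝ) -
            lam / μ)}).toReal ≤ ε := by
  intro ε hε
  have hα0 : 0 < α := by linarith
  have hκ0 : 0 < κ := (one_div_pos.2 hα0).trans hκ1
  obtain ⟨β, hκβ, hβα⟩ := exists_between ((one_div_lt hα0 hκ0).1 hκ1)
  have hβ1 : 1 < β := (one_lt_one_div hκ0 hκ2).trans hκβ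
  have hintβ : Integrable (fun ω => Z 0 ω ^ β) P :=
    integrable_rpow_of_isBigO_measure_lt (hmeas 0).aemeasurable
      ((hpos 0).mono fun _ h => h.le) (by linarith) hβα
      (isBigO_rpow_neg_of_tendsto_rpow_mul htail)
  obtain ⟨c, hc, hdev⟩ := exists_measureReal_renewalCount_gt_le_exp_neg_rpow hmeas hindep hident
    hpos hint hβ1 (by linarith) hintβ hμ hκ0 hκ2.le
  have hρ : 0 < (β - 1 / κ) / (β - 1) := div_pos (by linarith) (by linarith)
  obtain ⟨U, hU⟩ := eventually_atTop.1
    ((tendsto_rpow_mul_exp_neg_mul_rpow_atTop_nhds_zero (α - 1) hc hρ).eventually_le_const hε)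
  obtain ⟨Λ, hΛ⟩ := eventually_atTop.1
    (((tendsto_rpow_atTop hκ0).eventually_ge_atTop (max U 1)).and (eventually_ge_atTop 0))
  refine ⟨Λ, fun lam hlam u hu => ?_⟩
  obtain ⟨hlamκ, hlam0⟩ := hΛ lam hlam
  have hu0 : 0 < u := by linarith [le_max_right U 1]
  calc _ ≤ u ^ (α - 1) * Real.exp (-c * u ^ ((β - 1 / κ) / (β - 1))) :=
        mul_le_mul (Real.rpow_div_add_le_rpow_sub_one α hlam0 hu0) (hdev lam hlam0 u (by linarith [le_max_right U 1]) hu)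
          measureReal_nonneg (by positivity)
    _ ≤ ε := hU u (by linarith [le_max_left U 1])

/-- upper renewal large deviations. Let `(Z_i)` be i.i.d. strictly positive
with `μ = E Z < ∞` and `x^α P(Z > x) → c_Z`, `α ∈ (1,2)`, `c_Z > 0`. With
`S_n = Z_1 + ⋯ + Z_n` and `N(t) = #{n ≥ 1 : S_n ≤ t}`: for every `κ ∈ (1/α, 1)`,
`sup_{u > λ^κ} (u^α/(λ+u)) P(N(λ) - λ/μ > u/μ) → 0` as `λ → ∞`. -/
theorem stmt_2 {Ω : Type*} [MeasurableSpace Ω] (P : Measure Ω) [IsProbabilityMeasure P]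
    (Z : ℕ → Ω → ℝ) (hmeas : ∀ i, Measurable (Z i))
    (hindep : iIndepFun Z P)
    (hident : ∀ i, IdentDistrib (Z i) (Z 0) P P)
    (hpos : ∀ i, ∀ᵐ ω ∂P, 0 < Z i ω)
    (hint : Integrable (Z 0) P)
    (μ : ℝ) (hμ : μ = ∫ ω, Z 0 ω ∂P)
    (α c_Z : ℝ) (hα1 : 1 < α) (hα2 : α < 2) (hcZ : 0 < c_Z)
    (htail : Tendsto (fun x : ℝ => x ^ α * (P {ω | x < Z 0 ω}).toReal) atTop (nhds c_Z))
    (κ : ℝ) (hκ1 : 1 / α < κ) (hκ2 : κ < 1) :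
    ∀ ε > (0:ℝ), ∃ Λ : ℝ, ∀ lam ≥ Λ, ∀ u : ℝ, lam ^ κ < u →
      u ^ α / (lam + u) *
        (P {ω | u / μ <
          ((Set.ncard {n : ℕ | 1 ≤ n ∧ ∑ i ∈ Finset.range n, Z i ω ≤ lam} : ℝ) -
            lam / μ)}).toReal ≤ ε :=
  stmt_2_general P Z hmeas hindep hident hpos hint μ hμ α c_Z hα1 hα2 htail κ hκ1 hκ2
end

section
/- Let Z > 0 and W be random variables on a common probability space with |W| ≤ K almost surely for some constant K < ∞, and suppose lim_{x→∞} x^α P(Z > x) = c_Z for some α ∈ (1,2) and c_Z > 0. Assume there exist a Markov kernel κ from ℝ to ℝ and a probability measure ν_∞ on ℝ such that the joint law of (Z, W) equals the composition of the law of Z with κ (i.e. P(Z ∈ A, W ∈ B) = ∫_A κ(x)(B) d(law of Z)(x) for all Borel A, B ⊆ ℝ) and lim_{x→∞} sup_{y∈ℝ} | κ(x)((−∞,y]) − ν_∞((−∞,y]) | = 0. Then lim_{x→∞} x^α P( W·Z > x ) = c_Z ∫_ℝ (max(w,0))^α dν_∞(w) and lim_{x→∞} x^α P( W·Z ≤ −x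 ) = c_Z ∫_ℝ (max(−w,0))^α dν_∞(w). -/
/-!
Disintegrating along `Z`, `P(WZ > x) = ∫ κ z (Ioi (x / z)) dμ(z)` with `μ` the law of `Z`.
Both `κ z` and `ν∞` are carried by `[-L, L]` (for `ν∞` because `μ` has unbounded support and
`κ z → ν∞`), so only `z ≥ x / L` contribute, and replacing `κ z` by `ν∞` costs at most
`sup_{z ≥ x/L} d_K(κ z, ν∞) · μ[x/L, ∞) = o(x^(-α))`. For the product `μ ⊗ ν∞`, Fubini gives
`∫ μ(x/w, ∞) dν∞(w)`, and dominated convergence with `x^α μ(x/w, ∞) → c w^α` yields the limit.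
The lower tail is the same argument for `-W`, with `μ[t, ∞)`, which has the same asymptotics as
`μ(t, ∞)`, in place of `μ(t, ∞)`.
-/

open MeasureTheory ProbabilityTheory Filter Set
open scoped Topology

noncomputable def kolmogorovDist (m n : Measure ℝ) : ℝ :=
  ⨆ y : ℝ, |(m (Iic y)).toReal - (n (Iic y)).toReal|

section Kolmogorov

variable (m n : Measure ℝ) [IsProbabilityMeasure m] [IsProbabilityMeasure n]

lemma abs_toReal_measure_Iic_sub_le_kolmogorovDist (y : ℝ) :
    |(m (Iic y)).toReal - (n (Iic y)).toReal| ≤ kolmogorovDist m n := by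
  unfold kolmogorovDist
  refine le_ciSup (f := fun y => |(m (Iic y)).toReal - (n (Iic y)).toReal|) ⟨1, ?_⟩ y
  rintro _ ⟨y', rfl⟩
  have hm : (m (Iic y')).toReal ≤ 1 := by simpa [measureReal_def] using measureReal_le_one
  have hn : (n (Iic y')).toReal ≤ 1 := by simpa [measureReal_def] using measureReal_le_one
  exact abs_sub_le_iff.2 ⟨by linarith [(n (Iic y')).toReal_nonneg],
    by linarith [(m (Iic y')).toReal_nonneg]⟩

lemma abs_toReal_measure_Ioi_sub_le_kolmogorovDist (y : ℝ) :
    |(m (Ioi y)).toReal - (n (Ioi y)).toReal| ≤ kolmogorovDist m n := by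
  simp only [← measureReal_def, ← compl_Iic, probReal_compl_eq_one_sub measurableSet_Iic]
  rw [sub_sub_sub_cancel_left, abs_sub_comm]
  exact abs_toReal_measure_Iic_sub_le_kolmogorovDist m n y

end Kolmogorov

section Tails

variable {α c : ℝ}

lemma tendsto_rpow_mul_comp_of_tendsto_div {F g : ℝ → ℝ} {r : ℝ}
    (hF : Tendsto (fun x => x ^ α * F x) atTop (𝓝 c)) (hg : Tendsto g atTop atTop) (hr : 0 < r)
    (hgr : Tendsto (fun x => x / g x) atTop (𝓝 r)) :
    Tendsto (fun x => x ^ α * F (g x)) atTop (𝓝 (r ^ α * c)) := by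
  refine ((hgr.rpow_const (Or.inl hr.ne')).mul (hF.comp hg)).congr' ?_
  filter_upwards [eventually_ge_atTop 0, hg.eventually_gt_atTop 0] with x hx hgx
  rw [Function.comp_apply, Real.div_rpow hx hgx.le, ← mul_assoc,
    div_mul_cancel₀ _ (Real.rpow_pos_of_pos hgx α).ne']

lemma tendsto_rpow_mul_comp_div {F : ℝ → ℝ} (hF : Tendsto (fun x => x ^ α * F x) atTop (𝓝 c))
    {w : ℝ} (hw : 0 < w) : Tendsto (fun x => x ^ α * F (x / w)) atTop (𝓝 (w ^ α * c)) := by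
  refine tendsto_rpow_mul_comp_of_tendsto_div hF (tendsto_id.atTop_div_const hw) hw
    (tendsto_const_nhds.congr' ?_)
  filter_upwards [eventually_ne_atTop 0] with x hx
  rw [div_div_cancel₀ hx]

lemma tendsto_rpow_mul_toReal_measure_Ici {μ : Measure ℝ} [IsFiniteMeasure μ]
    (htail : Tendsto (fun x => x ^ α * (μ (Ioi x)).toReal) atTop (𝓝 c)) :
    Tendsto (fun x => x ^ α * (μ (Ici x)).toReal) atTop (𝓝 c) := by
  have hratio : Tendsto (fun x : ℝ => x / (x - 1)) atTop (𝓝 1) := by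
    have hinv : Tendsto (fun x : ℝ => 1 + (x - 1)⁻¹) atTop (𝓝 (1 + 0)) :=
      tendsto_const_nhds.add (tendsto_inv_atTop_zero.comp (tendsto_atTop_add_const_right _ _
        tendsto_id))
    rw [add_zero] at hinv
    refine hinv.congr' ?_
    filter_upwards [eventually_gt_atTop 1] with x hx
    field_simp [(sub_pos.2 hx).ne']
    ring
  have hshift := tendsto_rpow_mul_comp_of_tendsto_div htail
    (tendsto_atTop_add_const_right _ (-1) tendsto_id) one_pos hratio
  rw [Real.one_rpow, one_mul] at hshift
  refine tendsto_of_tendsto_of_tendsto_of_le_of_le' htail hshift ?_ ?_ <;>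
    filter_upwards [eventually_ge_atTop 0] with x hx <;>
    refine mul_le_mul_of_nonneg_left (ENNReal.toReal_mono (measure_ne_top _ _)
      (measure_mono ?_)) (Real.rpow_nonneg hx α)
  · exact Ioi_subset_Ici_self
  · exact Ici_subset_Ioi.2 (by simp)

lemma measure_Ioi_ne_zero_of_tendsto_rpow_mul {μ : Measure ℝ} (hc : c ≠ 0)
    (htail : Tendsto (fun x => x ^ α * (μ (Ioi x)).toReal) atTop (𝓝 c)) (N : ℝ) :
    μ (Ioi N) ≠ 0 := by
  intro hN
  refine hc (tendsto_nhds_unique htail (tendsto_const_nhds.congr' ?_))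
  filter_upwards [eventually_ge_atTop N] with x hx
  rw [measure_mono_null (Ioi_subset_Ioi hx) hN, ENNReal.toReal_zero, mul_zero]

lemma measurable_toReal_measure_Ioi (μ : Measure ℝ) [IsFiniteMeasure μ] :
    Measurable fun t => (μ (Ioi t)).toReal :=
  Antitone.measurable fun _ _ h => ENNReal.toReal_mono (measure_ne_top _ _)
    (measure_mono (Ioi_subset_Ioi h))

lemma measurable_toReal_measure_Ici (μ : Measure ℝ) [IsFiniteMeasure μ] :
    Measurable fun t => (μ (Ici t)).toReal :=
  Antitone.measurable fun _ _ h => ENNReal.toReal_mono (measure_ne_top _ _)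
    (measure_mono (Ici_subset_Ici.2 h))

end Tails

section Support

variable {μ : Measure ℝ} {κ : Kernel ℝ ℝ} [IsMarkovKernel κ] {ν : Measure ℝ}
  [IsProbabilityMeasure ν]

lemma toReal_measure_Iic_eq_of_ae_eq (hμ : ∀ N, μ (Ioi N) ≠ 0)
    (hD : Tendsto (fun z => kolmogorovDist (κ z) ν) atTop (𝓝 0)) {y r : ℝ}
    (h : ∀ᵐ z ∂μ, (κ z (Iic y)).toReal = r) : (ν (Iic y)).toReal = r := by
  have hlim : Tendsto (fun z => (κ z (Iic y)).toReal) atTop (𝓝 (ν (Iic y)).toReal) :=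
    tendsto_iff_norm_sub_tendsto_zero.2 <| squeeze_zero (fun _ => norm_nonneg _)
      (fun z => abs_toReal_measure_Iic_sub_le_kolmogorovDist (κ z) ν y) hD
  refine tendsto_nhds_unique_of_frequently_eq hlim tendsto_const_nhds
    (frequently_atTop.2 fun N => ?_)
  have : (ae (μ.restrict (Ioi N))).NeBot := ae_neBot.2 (by simpa using hμ N)
  obtain ⟨z, hzN, hz⟩ :=
    ((ae_restrict_mem (measurableSet_Ioi (a := N))).and (ae_restrict_of_ae h)).exists
  exact ⟨z, le_of_lt hzN, hz⟩

lemma ae_abs_le_of_tendsto_kolmogorovDist (hμ : ∀ N, μ (Ioi N) ≠ 0)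
    (hD : Tendsto (fun z => kolmogorovDist (κ z) ν) atTop (𝓝 0)) {K L : ℝ}
    (hκ : ∀ᵐ z ∂μ, ∀ᵐ w ∂κ z, |w| ≤ K) (hKL : K < L) : ∀ᵐ w ∂ν, |w| ≤ L := by
  have hupper : (ν (Iic L)).toReal = 1 := by
    refine toReal_measure_Iic_eq_of_ae_eq hμ hD (hκ.mono fun z hz => ?_)
    rw [(prob_compl_eq_zero_iff measurableSet_Iic).1 (mem_ae_iff.1 (hz.mono fun w hw =>
      (le_abs_self w).trans (hw.trans hKL.le))), ENNReal.toReal_one]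
  have hlower : (ν (Iic (-L))).toReal = 0 := by
    refine toReal_measure_Iic_eq_of_ae_eq hμ hD (hκ.mono fun z hz => ?_)
    rw [measure_eq_zero_iff_ae_notMem.2 (hz.mono fun w hw hwL => ?_), ENNReal.toReal_zero]
    linarith [neg_abs_le w, mem_Iic.1 hwL]
  have hνu : ∀ᵐ w ∂ν, w ≤ L := mem_ae_iff.2 <| (prob_compl_eq_zero_iff measurableSet_Iic).2 <|
    (ENNReal.toReal_eq_one_iff _).1 hupper
  have hνl : ∀ᵐ w ∂ν, w ∉ Iic (-L) := measure_eq_zero_iff_ae_notMem.1 <|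
    (ENNReal.toReal_eq_zero_iff _).1 hlower |>.resolve_right (measure_ne_top _ _)
  filter_upwards [hνu, hνl] with w hwu hwl
  exact abs_le.2 ⟨(lt_of_not_ge hwl).le, hwu⟩

end Support

section Limits

variable {α c L : ℝ}

lemma tendsto_rpow_mul_integral_of_abs_le_indicator {μ : Measure ℝ} [IsFiniteMeasure μ]
    (hL : 0 < L) (htail : Tendsto (fun x => x ^ α * (μ (Ici x)).toReal) atTop (𝓝 c))
    {D : ℝ → ℝ} (hD : Tendsto D atTop (𝓝 0)) {g : ℝ → ℝ → ℝ}
    (hg : ∀ᶠ x in atTop, ∀ᵐ z ∂μ, |g x z| ≤ (Ici (x / L)).indicator D z) :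
    Tendsto (fun x => x ^ α * ∫ z, g x z ∂μ) atTop (𝓝 0) := by
  have hM := tendsto_rpow_mul_comp_div htail hL
  refine (Asymptotics.isLittleO_one_iff ℝ).1 <|
    (Asymptotics.IsLittleO.trans_isBigO ?_ (hM.isBigO_one ℝ))
  refine Asymptotics.isLittleO_iff.2 fun η hη => ?_
  obtain ⟨N, hN⟩ := eventually_atTop.1 ((tendsto_order.1 hD.norm).2 η (by simpa using hη))
  filter_upwards [hg, eventually_ge_atTop (N * L), eventually_ge_atTop 0] with x hgx hxN hx
  have hxL : N ≤ x / L := (le_div_iff₀ hL).2 hxN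
  have hint : ‖∫ z, g x z ∂μ‖ ≤ η * (μ (Ici (x / L))).toReal := by
    calc ‖∫ z, g x z ∂μ‖ ≤ ∫ z, (Ici (x / L)).indicator (fun _ => η) z ∂μ := by
          refine norm_integral_le_of_norm_le ((integrable_const η).indicator measurableSet_Ici)
            (hgx.mono fun z hz => hz.trans ?_)
          by_cases hzx : z ∈ Ici (x / L)
          · simpa [indicator_of_mem hzx] using (le_abs_self _).trans (hN z (hxL.trans hzx)).le
          · simp [indicator_of_notMem hzx]
      _ = η * (μ (Ici (x / L))).toReal := by
          rw [integral_indicator_const _ measurableSet_Ici, smul_eq_mul, mul_comm, measureReal_def]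
  have hxα : 0 ≤ x ^ α := Real.rpow_nonneg hx α
  rw [norm_mul, Real.norm_of_nonneg hxα,
    Real.norm_of_nonneg (mul_nonneg hxα ENNReal.toReal_nonneg)]
  calc x ^ α * ‖∫ z, g x z ∂μ‖ ≤ x ^ α * (η * (μ (Ici (x / L))).toReal) :=
        mul_le_mul_of_nonneg_left hint hxα
    _ = η * (x ^ α * (μ (Ici (x / L))).toReal) := by ring

lemma tendsto_rpow_mul_indicator_comp_div (hα : α ≠ 0) {F : ℝ → ℝ}
    (hF : Tendsto (fun x => x ^ α * F x) atTop (𝓝 c)) (w : ℝ) :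
    Tendsto (fun x => x ^ α * (Ioi 0).indicator (fun v => F (x / v)) w) atTop
      (𝓝 (c * max w 0 ^ α)) := by
  rcases le_or_gt w 0 with hw | hw
  · simp [indicator_of_notMem (show w ∉ Ioi 0 from not_lt.2 hw), max_eq_right hw, Real.zero_rpow hα]
  · simpa [indicator_of_mem (mem_Ioi.2 hw), max_eq_left hw.le, mul_comm c]
      using tendsto_rpow_mul_comp_div hF hw

lemma tendsto_integral_rpow_mul_indicator_comp_div {ν : Measure ℝ} [IsFiniteMeasure ν]
    (hα : 0 < α) (hL : 0 < L) {F : ℝ → ℝ} (hFm : Measurable F)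
    (hF : Tendsto (fun x => x ^ α * F x) atTop (𝓝 c)) (hν : ∀ᵐ w ∂ν, w ≤ L) :
    Tendsto (fun x => ∫ w, x ^ α * (Ioi 0).indicator (fun v => F (x / v)) w ∂ν) atTop
      (𝓝 (c * ∫ w, max w 0 ^ α ∂ν)) := by
  obtain ⟨T, hT⟩ := eventually_atTop.1 (hF.abs.eventually (eventually_le_nhds (lt_add_one |c|)))
  rw [← integral_const_mul]
  refine tendsto_integral_filter_of_dominated_convergence (fun _ => L ^ α * (|c| + 1))
    (Eventually.of_forall fun x => ?_) ?_ (integrable_const _)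
    (Eventually.of_forall (tendsto_rpow_mul_indicator_comp_div hα.ne' hF))
  · exact (measurable_const.mul ((hFm.comp (measurable_const.div measurable_id)).indicator
      measurableSet_Ioi)).aestronglyMeasurable
  filter_upwards [eventually_ge_atTop (max T 0 * L)] with x hx
  filter_upwards [hν] with w hwL
  have hx0 : 0 ≤ x := le_trans (mul_nonneg (le_max_right T 0) hL.le) hx
  by_cases hw : w ∈ Ioi 0
  · have hxw : T ≤ x / w := by
      calc T ≤ x / L := (le_div_iff₀ hL).2 ((mul_le_mul_of_nonneg_right (le_max_left T 0)
            hL.le).trans hx)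
        _ ≤ x / w := div_le_div_of_nonneg_left hx0 hw hwL
    have hsplit : x ^ α = w ^ α * (x / w) ^ α := by
      rw [Real.div_rpow hx0 hw.le, mul_div_cancel₀ _ (Real.rpow_pos_of_pos hw α).ne']
    rw [indicator_of_mem hw, hsplit, mul_assoc, norm_mul,
      Real.norm_of_nonneg (Real.rpow_nonneg hw.le α)]
    exact mul_le_mul (Real.rpow_le_rpow hw.le hwL hα.le) (hT _ hxw)
      (norm_nonneg _) (Real.rpow_nonneg hL.le α)
  · rw [indicator_of_notMem hw, mul_zero, norm_zero]
    positivity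

end Limits

section Disintegration

variable {X Y : Type*} [MeasurableSpace X] [MeasurableSpace Y] (μ : Measure X) [IsFiniteMeasure μ]
  {s : Set (X × Y)}

lemma toReal_compProd_apply (κ : Kernel X Y) [IsFiniteKernel κ] (hs : MeasurableSet s) :
    ((μ ⊗ₘ κ) s).toReal = ∫ a, (κ a (Prod.mk a ⁻¹' s)).toReal ∂μ := by
  rw [Measure.compProd_apply hs,
    integral_toReal (Kernel.measurable_kernel_prodMk_left hs).aemeasurable
    (ae_of_all _ fun a => measure_lt_top _ _)]

lemma integrable_toReal_kernel_prodMk (κ : Kernel X Y) [IsFiniteKernel κ] (hs : MeasurableSet s) :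
    Integrable (fun a => (κ a (Prod.mk a ⁻¹' s)).toReal) μ :=
  integrable_toReal_of_lintegral_ne_top (Kernel.measurable_kernel_prodMk_left hs).aemeasurable
    (by rw [← Measure.compProd_apply hs]; exact measure_ne_top _ _)

lemma toReal_compProd_sub_toReal_compProd (κ η : Kernel X Y) [IsFiniteKernel κ] [IsFiniteKernel η]
    (hs : MeasurableSet s) :
    ((μ ⊗ₘ κ) s).toReal - ((μ ⊗ₘ η) s).toReal =
      ∫ a, ((κ a (Prod.mk a ⁻¹' s)).toReal - (η a (Prod.mk a ⁻¹' s)).toReal) ∂μ := by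
  rw [toReal_compProd_apply μ κ hs, toReal_compProd_apply μ η hs,
    integral_sub (integrable_toReal_kernel_prodMk μ κ hs) (integrable_toReal_kernel_prodMk μ η hs)]

lemma toReal_prod_apply_symm (ν : Measure Y) [SFinite ν] (hs : MeasurableSet s) :
    ((μ.prod ν) s).toReal = ∫ b, (μ ((fun a => (a, b)) ⁻¹' s)).toReal ∂ν := by
  rw [Measure.prod_apply_symm hs, integral_toReal (measurable_measure_prodMk_right hs).aemeasurable
    (ae_of_all _ fun b => measure_lt_top _ _)]

end Disintegration

section Slices

variable {L x z : ℝ}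

lemma measure_eq_zero_of_ae_abs_le {m : Measure ℝ} (hm : ∀ᵐ w ∂m, |w| ≤ L) {s : Set ℝ}
    (hs : ∀ w ∈ s, L < |w|) : m s = 0 :=
  measure_eq_zero_iff_ae_notMem.2 (hm.mono fun w hw hws => (hs w hws).not_ge hw)

variable {m n : Measure ℝ} [IsProbabilityMeasure m] [IsProbabilityMeasure n]

lemma abs_toReal_measure_setOf_lt_mul_sub_le (hL : 0 < L) (hz : 0 < z)
    (hm : ∀ᵐ w ∂m, |w| ≤ L) (hn : ∀ᵐ w ∂n, |w| ≤ L) :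
    |(m {w | x < w * z}).toReal - (n {w | x < w * z}).toReal| ≤
      (Ici (x / L)).indicator (fun _ => kolmogorovDist m n) z := by
  by_cases hzx : z ∈ Ici (x / L)
  · have hset : {w : ℝ | x < w * z} = Ioi (x / z) := by ext w; simp [div_lt_iff₀ hz]
    rw [indicator_of_mem hzx, hset]
    exact abs_toReal_measure_Ioi_sub_le_kolmogorovDist m n _
  · have hzL : z * L < x := (lt_div_iff₀ hL).1 (not_le.1 hzx)
    have hfar : ∀ w ∈ {w : ℝ | x < w * z}, L < |w| := fun w (hw : x < w * z) => by
      by_contra! hwL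
      nlinarith [mul_le_mul_of_nonneg_right ((le_abs_self w).trans hwL) hz.le]
    rw [indicator_of_notMem hzx, measure_eq_zero_of_ae_abs_le hm hfar,
      measure_eq_zero_of_ae_abs_le hn hfar, sub_self, abs_zero]

lemma abs_toReal_measure_setOf_mul_le_neg_sub_le (hL : 0 < L) (hz : 0 < z)
    (hm : ∀ᵐ w ∂m, |w| ≤ L) (hn : ∀ᵐ w ∂n, |w| ≤ L) :
    |(m {w | w * z ≤ -x}).toReal - (n {w | w * z ≤ -x}).toReal| ≤
      (Ici (x / L)).indicator (fun _ => kolmogorovDist m n) z := by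
  by_cases hzx : z ∈ Ici (x / L)
  · have hset : {w : ℝ | w * z ≤ -x} = Iic (-x / z) := by ext w; simp [le_div_iff₀ hz]
    rw [indicator_of_mem hzx, hset]
    exact abs_toReal_measure_Iic_sub_le_kolmogorovDist m n _
  · have hzL : z * L < x := (lt_div_iff₀ hL).1 (not_le.1 hzx)
    have hfar : ∀ w ∈ {w : ℝ | w * z ≤ -x}, L < |w| := fun w (hw : w * z ≤ -x) => by
      by_contra! hwL
      nlinarith [mul_le_mul_of_nonneg_right ((neg_le_abs w).trans hwL) hz.le]
    rw [indicator_of_notMem hzx, measure_eq_zero_of_ae_abs_le hm hfar,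
      measure_eq_zero_of_ae_abs_le hn hfar, sub_self, abs_zero]

variable {μ : Measure ℝ}

lemma toReal_measure_setOf_lt_mul (hμ : ∀ᵐ z ∂μ, 0 < z) (hx : 0 ≤ x) (w : ℝ) :
    (μ {z | x < w * z}).toReal = (Ioi 0).indicator (fun v => (μ (Ioi (x / v))).toReal) w := by
  rcases lt_or_ge 0 w with hw | hw
  · have hset : {z : ℝ | x < w * z} = Ioi (x / w) := by ext z; simp [div_lt_iff₀' hw]
    rw [indicator_of_mem (mem_Ioi.2 hw), hset]
  · have hnull : μ {z | x < w * z} = 0 :=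
      measure_eq_zero_iff_ae_notMem.2 (hμ.mono fun z hz (hxz : x < w * z) => by nlinarith)
    rw [indicator_of_notMem (show w ∉ Ioi 0 from not_lt.2 hw), hnull, ENNReal.toReal_zero]

lemma toReal_measure_setOf_mul_le_neg (hμ : ∀ᵐ z ∂μ, 0 < z) (hx : 0 < x) (w : ℝ) :
    (μ {z | w * z ≤ -x}).toReal =
      (Ioi 0).indicator (fun v => (μ (Ici (x / v))).toReal) (-w) := by
  rcases lt_or_ge 0 (-w) with hw | hw
  · have hset : {z : ℝ | w * z ≤ -x} = Ici (x / -w) := by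
      ext z
      simp only [mem_Ici, div_le_iff₀' hw, neg_mul, le_neg]
      rfl
    rw [indicator_of_mem (mem_Ioi.2 hw), hset]
  · have hnull : μ {z | w * z ≤ -x} = 0 :=
      measure_eq_zero_iff_ae_notMem.2 (hμ.mono fun z hz (hxz : w * z ≤ -x) => by nlinarith)
    rw [indicator_of_notMem (show -w ∉ Ioi 0 from not_lt.2 hw), hnull, ENNReal.toReal_zero]

end Slices

section Breiman

variable {μ : Measure ℝ} [IsFiniteMeasure μ] {κ : Kernel ℝ ℝ} [IsMarkovKernel κ] {ν : Measure ℝ}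
  [IsProbabilityMeasure ν] {α c L : ℝ}

theorem tendsto_rpow_mul_compProd_setOf_lt_mul (hα : 0 < α) (hL : 0 < L)
    (hμ : ∀ᵐ z ∂μ, 0 < z) (htail : Tendsto (fun x => x ^ α * (μ (Ioi x)).toReal) atTop (𝓝 c))
    (hκ : ∀ᵐ z ∂μ, ∀ᵐ w ∂κ z, |w| ≤ L) (hν : ∀ᵐ w ∂ν, |w| ≤ L)
    (hD : Tendsto (fun z => kolmogorovDist (κ z) ν) atTop (𝓝 0)) :
    Tendsto (fun x => x ^ α * ((μ ⊗ₘ κ) {p | x < p.2 * p.1}).toReal) atTop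
      (𝓝 (c * ∫ w, max w 0 ^ α ∂ν)) := by
  have hs (x : ℝ) : MeasurableSet {p : ℝ × ℝ | x < p.2 * p.1} :=
    measurableSet_lt measurable_const (measurable_snd.mul measurable_fst)
  have hindep : Tendsto (fun x => x ^ α * ((μ.prod ν) {p | x < p.2 * p.1}).toReal) atTop
      (𝓝 (c * ∫ w, max w 0 ^ α ∂ν)) := by
    refine (tendsto_integral_rpow_mul_indicator_comp_div hα hL (measurable_toReal_measure_Ioi μ)
      htail (hν.mono fun w hw => (le_abs_self w).trans hw)).congr' ?_
    filter_upwards [eventually_ge_atTop 0] with x hx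
    rw [toReal_prod_apply_symm μ ν (hs x), ← integral_const_mul]
    refine integral_congr_ae (ae_of_all _ fun w => ?_)
    exact congrArg (x ^ α * ·) (toReal_measure_setOf_lt_mul hμ hx w).symm
  have herr : Tendsto (fun x => x ^ α * ∫ z, ((κ z {w | x < w * z}).toReal -
      (ν {w | x < w * z}).toReal) ∂μ) atTop (𝓝 0) :=
    tendsto_rpow_mul_integral_of_abs_le_indicator hL (tendsto_rpow_mul_toReal_measure_Ici htail)
      hD (Eventually.of_forall fun x => by
        filter_upwards [hμ, hκ] with z hz hzκ
        exact abs_toReal_measure_setOf_lt_mul_sub_le hL hz hzκ hν)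
  refine (add_zero (c * ∫ w, max w 0 ^ α ∂ν) ▸ hindep.add herr).congr fun x => ?_
  have hsplit := toReal_compProd_sub_toReal_compProd μ κ (Kernel.const ℝ ν) (hs x)
  rw [Measure.compProd_const, sub_eq_iff_eq_add'] at hsplit
  rw [hsplit, mul_add]
  rfl

theorem tendsto_rpow_mul_compProd_setOf_mul_le_neg (hα : 0 < α) (hL : 0 < L)
    (hμ : ∀ᵐ z ∂μ, 0 < z) (htail : Tendsto (fun x => x ^ α * (μ (Ioi x)).toReal) atTop (𝓝 c))
    (hκ : ∀ᵐ z ∂μ, ∀ᵐ w ∂κ z, |w| ≤ L) (hν : ∀ᵐ w ∂ν, |w| ≤ L)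
    (hD : Tendsto (fun z => kolmogorovDist (κ z) ν) atTop (𝓝 0)) :
    Tendsto (fun x => x ^ α * ((μ ⊗ₘ κ) {p | p.2 * p.1 ≤ -x}).toReal) atTop
      (𝓝 (c * ∫ w, max (-w) 0 ^ α ∂ν)) := by
  have hs (x : ℝ) : MeasurableSet {p : ℝ × ℝ | p.2 * p.1 ≤ -x} :=
    measurableSet_le (measurable_snd.mul measurable_fst) measurable_const
  have hIci := tendsto_rpow_mul_toReal_measure_Ici htail
  -- reflecting `ν` turns the lower tail into an upper one, with `Ici` in place of `Ioi`
  let e := MeasurableEquiv.neg ℝ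
  have hνe : ∀ᵐ w ∂ν.map e, w ≤ L :=
    (ae_map_iff e.measurable.aemeasurable (measurableSet_le measurable_id measurable_const)).2
      (hν.mono fun w hw => (neg_le_abs w).trans hw)
  have hindep : Tendsto (fun x => x ^ α * ((μ.prod ν) {p | p.2 * p.1 ≤ -x}).toReal) atTop
      (𝓝 (c * ∫ w, max (-w) 0 ^ α ∂ν)) := by
    have hlim := tendsto_integral_rpow_mul_indicator_comp_div hα hL
      (measurable_toReal_measure_Ici μ) hIci hνe
    simp only [integral_map_equiv] at hlim
    refine hlim.congr' ?_
    filter_upwards [eventually_gt_atTop 0] with x hx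
    rw [toReal_prod_apply_symm μ ν (hs x), ← integral_const_mul]
    refine integral_congr_ae (ae_of_all _ fun w => ?_)
    exact congrArg (x ^ α * ·) (toReal_measure_setOf_mul_le_neg hμ hx w).symm
  have herr : Tendsto (fun x => x ^ α * ∫ z, ((κ z {w | w * z ≤ -x}).toReal -
      (ν {w | w * z ≤ -x}).toReal) ∂μ) atTop (𝓝 0) :=
    tendsto_rpow_mul_integral_of_abs_le_indicator hL hIci hD (Eventually.of_forall fun x => by
        filter_upwards [hμ, hκ] with z hz hzκ
        exact abs_toReal_measure_setOf_mul_le_neg_sub_le hL hz hzκ hν)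
  refine (add_zero (c * ∫ w, max (-w) 0 ^ α ∂ν) ▸ hindep.add herr).congr fun x => ?_
  have hsplit := toReal_compProd_sub_toReal_compProd μ κ (Kernel.const ℝ ν) (hs x)
  rw [Measure.compProd_const, sub_eq_iff_eq_add'] at hsplit
  rw [hsplit, mul_add]
  rfl

end Breiman

theorem stmt_7_general {Ω : Type*} [MeasurableSpace Ω] (P : Measure Ω) [IsProbabilityMeasure P]
    (Z W : Ω → ℝ) (hZmeas : Measurable Z) (hWmeas : Measurable W)
    (hZpos : ∀ᵐ ω ∂P, 0 < Z ω)
    (K : ℝ) (hK : ∀ᵐ ω ∂P, |W ω| ≤ K)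
    (α c_Z : ℝ) (hα1 : 1 < α) (hcZ : 0 < c_Z)
    (htail : Tendsto (fun x : ℝ => x ^ α * (P {ω | x < Z ω}).toReal) atTop (nhds c_Z))
    (κ : Kernel ℝ ℝ) [IsMarkovKernel κ]
    (νinf : Measure ℝ) [IsProbabilityMeasure νinf]
    (hjoint : Measure.map (fun ω => (Z ω, W ω)) P = (Measure.map Z P).compProd κ)
    (hκconv : Tendsto (fun x : ℝ =>
        ⨆ y : ℝ, |((κ x) (Set.Iic y)).toReal - (νinf (Set.Iic y)).toReal|)
      atTop (nhds 0)) :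
    Tendsto (fun x : ℝ => x ^ α * (P {ω | x < W ω * Z ω}).toReal) atTop
        (nhds (c_Z * ∫ w, max w 0 ^ α ∂νinf)) ∧
    Tendsto (fun x : ℝ => x ^ α * (P {ω | W ω * Z ω ≤ -x}).toReal) atTop
        (nhds (c_Z * ∫ w, max (-w) 0 ^ α ∂νinf)) := by
  set μ := P.map Z
  have hμ : ∀ᵐ z ∂μ, 0 < z := (ae_map_iff hZmeas.aemeasurable measurableSet_Ioi).2 hZpos
  have hμtail : Tendsto (fun x => x ^ α * (μ (Ioi x)).toReal) atTop (𝓝 c_Z) :=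
    htail.congr fun x => by rw [Measure.map_apply hZmeas measurableSet_Ioi]; rfl
  have hκK : ∀ᵐ z ∂μ, ∀ᵐ w ∂κ z, |w| ≤ K := by
    refine Measure.ae_ae_of_ae_compProd (p := fun p => |p.2| ≤ K) ?_
    rw [← hjoint]
    exact (ae_map_iff (hZmeas.prodMk hWmeas).aemeasurable
      (measurableSet_le measurable_snd.abs measurable_const)).2 hK
  have hKL : K < |K| + 1 := by linarith [le_abs_self K]
  have hν := ae_abs_le_of_tendsto_kolmogorovDist
    (measure_Ioi_ne_zero_of_tendsto_rpow_mul hcZ.ne' hμtail) hκconv hκK hKL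
  have hκ := hκK.mono fun z hz => hz.mono fun w hw => hw.trans hKL.le
  have hL : 0 < |K| + 1 := by positivity
  have hα : 0 < α := by linarith
  have hlaw {s : Set (ℝ × ℝ)} (hs : MeasurableSet s) :
      P ((fun ω => (Z ω, W ω)) ⁻¹' s) = (μ ⊗ₘ κ) s := by
    rw [← hjoint, Measure.map_apply (hZmeas.prodMk hWmeas) hs]
  refine ⟨(tendsto_rpow_mul_compProd_setOf_lt_mul hα hL hμ hμtail hκ hν hκconv).congr fun x => ?_,
    (tendsto_rpow_mul_compProd_setOf_mul_le_neg hα hL hμ hμtail hκ hν hκconv).congr fun x => ?_⟩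
  · rw [← hlaw (s := {p | x < p.2 * p.1})
      (measurableSet_lt measurable_const (measurable_snd.mul measurable_fst))]
    rfl
  · rw [← hlaw (s := {p | p.2 * p.1 ≤ -x})
      (measurableSet_le (measurable_snd.mul measurable_fst) measurable_const)]
    rfl

/-- Breiman's lemma for dependent factors. Let `Z > 0` with
`x^α P(Z > x) → c_Z` (`α ∈ (1,2)`, `c_Z > 0`), `|W| ≤ K` a.s., and let `κ` be a Markov
kernel such that the joint law of `(Z,W)` is the composition of the law of `Z` with `κ`
and `sup_y |κ(x)((-∞,y]) - ν_∞((-∞,y])| → 0` as `x → ∞`. Then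
`x^α P(WZ > x) → c_Z ∫ (w)₊^α dν_∞` and `x^α P(WZ ≤ -x) → c_Z ∫ (w)₋^α dν_∞`. -/
theorem stmt_7 {Ω : Type*} [MeasurableSpace Ω] (P : Measure Ω) [IsProbabilityMeasure P]
    (Z W : Ω → ℝ) (hZmeas : Measurable Z) (hWmeas : Measurable W)
    (hZpos : ∀ᵐ ω ∂P, 0 < Z ω)
    (K : ℝ) (hK : ∀ᵐ ω ∂P, |W ω| ≤ K)
    (α c_Z : ℝ) (hα1 : 1 < α) (hα2 : α < 2) (hcZ : 0 < c_Z)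
    (htail : Tendsto (fun x : ℝ => x ^ α * (P {ω | x < Z ω}).toReal) atTop (nhds c_Z))
    (κ : Kernel ℝ ℝ) [IsMarkovKernel κ]
    (νinf : Measure ℝ) [IsProbabilityMeasure νinf]
    (hjoint : Measure.map (fun ω => (Z ω, W ω)) P = (Measure.map Z P).compProd κ)
    (hκconv : Tendsto (fun x : ℝ =>
        ⨆ y : ℝ, |((κ x) (Set.Iic y)).toReal - (νinf (Set.Iic y)).toReal|)
      atTop (nhds 0)) :
    Tendsto (fun x : ℝ => x ^ α * (P {ω | x < W ω * Z ω}).toReal) atTop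
        (nhds (c_Z * ∫ w, max w 0 ^ α ∂νinf)) ∧
    Tendsto (fun x : ℝ => x ^ α * (P {ω | W ω * Z ω ≤ -x}).toReal) atTop
        (nhds (c_Z * ∫ w, max (-w) 0 ^ α ∂νinf)) :=
  stmt_7_general P Z W hZmeas hWmeas hZpos K hK α c_Z hα1 hcZ htail κ νinf hjoint hκconv
end

section
/- Let A > 0 and R > 0 be independent random variables on a common probability space satisfying lim_{r→∞} r^ρ P(R > r) = c_ρ and lim_{a→0+} a^{−κ} P(A ≤ a) = c_κ, where ρ > 0, κ > 0, c_ρ > 0, c_κ > 0 and 1 < ρ + κ < 2. Then lim_{t→∞} t^{ρ+κ−1} ∫_0^∞ P(R > u + t) · E[ e^{−A(2u+t)} ] du = Γ(κ+1) c_κ c_ρ ∫_0^∞ (1+z)^{−ρ} (1+2z)^{−κ} dz, and both integrals are finite. -/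
/-!
Substituting `u = t z`, the integrand times `t ^ (ρ + κ)` becomes
`(1 + z) ^ (-ρ) * (1 + 2 z) ^ (-κ) * ψ_R (t (1 + z)) * ψ_A (t (1 + 2 z))`, where
`ψ_R r = r ^ ρ P(R > r)` and `ψ_A s = s ^ κ E[e^{-sA}]`. The first factor tends to `c_ρ` by
hypothesis, the second to `Γ(κ + 1) c_κ` by an Abelian argument: by Fubini,
`s ^ κ E[e^{-sA}] = ∫₀^∞ e^{-x} x ^ κ φ(x / s) dx` with `φ a = a ^ (-κ) P(A ≤ a) → c_κ` as `a → 0+`.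
Both factors are bounded on `(0, ∞)` and `ρ + κ > 1` makes the weight integrable, so dominated
convergence applies.
-/

open MeasureTheory ProbabilityTheory Filter Set Real
open scoped Topology ENNReal

lemma exists_rpow_mul_le_of_tendsto {g : ℝ → ℝ} {ρ c : ℝ} (hρ : 0 ≤ ρ)
    (hg : ∀ r > 0, g r ≤ 1) (h : Tendsto (fun r => r ^ ρ * g r) atTop (𝓝 c)) :
    ∃ M, ∀ r > 0, r ^ ρ * g r ≤ M := by
  obtain ⟨r₀, hr₀⟩ := eventually_atTop.mp (h.eventually (eventually_le_nhds (lt_add_one c)))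
  refine ⟨max (c + 1) (r₀ ^ ρ), fun r hr => ?_⟩
  rcases le_or_gt r₀ r with hle | hlt
  · exact (hr₀ r hle).trans (le_max_left _ _)
  · calc r ^ ρ * g r ≤ r ^ ρ := mul_le_of_le_one_right (rpow_nonneg hr.le ρ) (hg r hr)
      _ ≤ r₀ ^ ρ := rpow_le_rpow hr.le hlt.le hρ
      _ ≤ _ := le_max_right _ _

lemma exists_rpow_neg_mul_le_of_tendsto {g : ℝ → ℝ} {κ c : ℝ} (hκ : 0 ≤ κ)
    (hg : ∀ a > 0, g a ≤ 1) (h : Tendsto (fun a => a ^ (-κ) * g a) (𝓝[>] 0) (𝓝 c)) :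
    ∃ M, ∀ a > 0, a ^ (-κ) * g a ≤ M := by
  have hinv : ∀ r > (0 : ℝ), r⁻¹ ^ (-κ) = r ^ κ := fun r hr => by
    rw [rpow_neg (inv_nonneg.mpr hr.le), inv_rpow hr.le, inv_inv]
  have hlim : Tendsto (fun r => r ^ κ * g r⁻¹) atTop (𝓝 c) :=
    (h.comp tendsto_inv_atTop_nhdsGT_zero).congr' <| by
      filter_upwards [eventually_gt_atTop 0] with r hr
      simp only [Function.comp_apply, hinv r hr]
  obtain ⟨M, hM⟩ := exists_rpow_mul_le_of_tendsto hκ (fun r hr => hg _ (inv_pos.mpr hr)) hlim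
  refine ⟨M, fun a ha => ?_⟩
  have := hM a⁻¹ (inv_pos.mpr ha)
  rwa [inv_inv, inv_rpow ha.le, ← rpow_neg ha.le] at this

structure PowerLawDecay (G : ℝ → ℝ) (ρ c : ℝ) : Prop where
  nonneg : ∀ r > 0, 0 ≤ G r
  antitoneOn : AntitoneOn G (Ioi 0)
  bounded : ∃ M, ∀ r > 0, r ^ ρ * G r ≤ M
  tendsto : Tendsto (fun r => r ^ ρ * G r) atTop (𝓝 c)

lemma PowerLawDecay.of_le_one {G : ℝ → ℝ} {ρ c : ℝ} (hρ : 0 ≤ ρ) (h₀ : ∀ r > 0, 0 ≤ G r)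
    (h₁ : ∀ r > 0, G r ≤ 1) (hG : AntitoneOn G (Ioi 0))
    (hlim : Tendsto (fun r => r ^ ρ * G r) atTop (𝓝 c)) : PowerLawDecay G ρ c :=
  ⟨h₀, hG, exists_rpow_mul_le_of_tendsto hρ h₁ hlim, hlim⟩

lemma integrableOn_one_add_rpow_neg_mul_one_add_two_mul_rpow_neg {ρ κ : ℝ} (hκ : 0 ≤ κ)
    (hρκ : 1 < ρ + κ) :
    IntegrableOn (fun z : ℝ => (1 + z) ^ (-ρ) * (1 + 2 * z) ^ (-κ)) (Ioi 0) := by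
  have hmaj : Integrable (fun z : ℝ => (1 + ‖z‖) ^ (-(ρ + κ))) :=
    integrable_one_add_norm (by simpa using hρκ)
  refine hmaj.integrableOn.mono' (by fun_prop : Measurable _).aestronglyMeasurable ?_
  filter_upwards [self_mem_ae_restrict measurableSet_Ioi] with z (hz : 0 < z)
  have h₁ : 0 < 1 + z := by linarith
  rw [norm_of_nonneg (by positivity), norm_of_nonneg hz.le, neg_add, rpow_add h₁]
  exact mul_le_mul_of_nonneg_left (rpow_le_rpow_of_nonpos h₁ (by linarith) (by linarith))
    (by positivity)

section Rescaling

variable {G F : ℝ → ℝ} {ρ κ cG cF t : ℝ}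

lemma rpow_mul_integrand_eq (ht : 0 < t) {z : ℝ} (hz : 0 ≤ z) :
    t ^ (ρ + κ) * (G (t * z + t) * F (2 * (t * z) + t)) =
      (1 + z) ^ (-ρ) * (1 + 2 * z) ^ (-κ) *
        ((t * (1 + z)) ^ ρ * G (t * (1 + z)) *
          ((t * (1 + 2 * z)) ^ κ * F (t * (1 + 2 * z)))) := by
  have h₁ : 0 < 1 + z := by linarith
  have h₂ : 0 < 1 + 2 * z := by linarith
  rw [mul_rpow ht.le h₁.le, mul_rpow ht.le h₂.le, rpow_add ht, rpow_neg h₁.le, rpow_neg h₂.le,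
    show t * z + t = t * (1 + z) by ring, show 2 * (t * z) + t = t * (1 + 2 * z) by ring]
  field_simp

lemma PowerLawDecay.aestronglyMeasurable_rescaled (hG : PowerLawDecay G ρ cG)
    (hF : PowerLawDecay F κ cF) (ht : 0 < t) :
    AEStronglyMeasurable (fun z => t ^ (ρ + κ) * (G (t * z + t) * F (2 * (t * z) + t)))
      (volume.restrict (Ioi 0)) := by
  have hG' : AntitoneOn (fun z => G (t * z + t)) (Ioi 0) :=
    fun a (ha : 0 < a) b (hb : 0 < b) hab =>
    hG.antitoneOn (by simp only [mem_Ioi]; positivity) (by simp only [mem_Ioi]; positivity)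
      (by nlinarith)
  have hF' : AntitoneOn (fun z => F (2 * (t * z) + t)) (Ioi 0) :=
    fun a (ha : 0 < a) b (hb : 0 < b) hab =>
    hF.antitoneOn (by simp only [mem_Ioi]; positivity) (by simp only [mem_Ioi]; positivity)
      (by nlinarith)
  exact ((aemeasurable_restrict_of_antitoneOn measurableSet_Ioi hG').mul
    (aemeasurable_restrict_of_antitoneOn measurableSet_Ioi hF')).const_mul _
    |>.aestronglyMeasurable

lemma PowerLawDecay.exists_norm_rescaled_le (hG : PowerLawDecay G ρ cG)
    (hF : PowerLawDecay F κ cF) :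
    ∃ M, ∀ t > 0, ∀ᵐ z ∂volume.restrict (Ioi 0),
      ‖t ^ (ρ + κ) * (G (t * z + t) * F (2 * (t * z) + t))‖ ≤
        M * ((1 + z) ^ (-ρ) * (1 + 2 * z) ^ (-κ)) := by
  obtain ⟨MG, hMG⟩ := hG.bounded
  obtain ⟨MF, hMF⟩ := hF.bounded
  refine ⟨MG * MF, fun t ht => ?_⟩
  filter_upwards [self_mem_ae_restrict measurableSet_Ioi] with z (hz : 0 < z)
  have hr : 0 < t * (1 + z) := by positivity
  have hs : 0 < t * (1 + 2 * z) := by positivity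
  have hψG : 0 ≤ (t * (1 + z)) ^ ρ * G (t * (1 + z)) :=
    mul_nonneg (rpow_nonneg hr.le _) (hG.nonneg _ hr)
  have hψF : 0 ≤ (t * (1 + 2 * z)) ^ κ * F (t * (1 + 2 * z)) :=
    mul_nonneg (rpow_nonneg hs.le _) (hF.nonneg _ hs)
  have hw : 0 ≤ (1 + z) ^ (-ρ) * (1 + 2 * z) ^ (-κ) := by positivity
  rw [rpow_mul_integrand_eq ht hz.le, norm_of_nonneg (by positivity), mul_comm (MG * MF)]
  exact mul_le_mul_of_nonneg_left
    (mul_le_mul (hMG _ hr) (hMF _ hs) hψF (hψG.trans (hMG _ hr))) hw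

lemma PowerLawDecay.integrableOn_rescaled (hG : PowerLawDecay G ρ cG)
    (hF : PowerLawDecay F κ cF) (hκ : 0 ≤ κ) (hρκ : 1 < ρ + κ) (ht : 0 < t) :
    IntegrableOn (fun z => t ^ (ρ + κ) * (G (t * z + t) * F (2 * (t * z) + t))) (Ioi 0) := by
  obtain ⟨M, hM⟩ := hG.exists_norm_rescaled_le hF
  exact ((integrableOn_one_add_rpow_neg_mul_one_add_two_mul_rpow_neg hκ hρκ).const_mul M).mono'
    (hG.aestronglyMeasurable_rescaled hF ht) (hM t ht)

lemma PowerLawDecay.tendsto_integral_rescaled (hG : PowerLawDecay G ρ cG)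
    (hF : PowerLawDecay F κ cF) (hκ : 0 ≤ κ) (hρκ : 1 < ρ + κ) :
    Tendsto (fun t => ∫ z in Ioi 0, t ^ (ρ + κ) * (G (t * z + t) * F (2 * (t * z) + t))) atTop
      (𝓝 (cF * cG * ∫ z in Ioi 0, (1 + z) ^ (-ρ) * (1 + 2 * z) ^ (-κ))) := by
  obtain ⟨M, hM⟩ := hG.exists_norm_rescaled_le hF
  rw [← integral_const_mul]
  refine tendsto_integral_filter_of_dominated_convergence _
    (eventually_gt_atTop 0 |>.mono fun t ht => hG.aestronglyMeasurable_rescaled hF ht)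
    (eventually_gt_atTop 0 |>.mono hM)
    ((integrableOn_one_add_rpow_neg_mul_one_add_two_mul_rpow_neg hκ hρκ).const_mul M) ?_
  filter_upwards [self_mem_ae_restrict measurableSet_Ioi] with z (hz : 0 < z)
  have hr : Tendsto (fun t : ℝ => t * (1 + z)) atTop atTop :=
    tendsto_id.atTop_mul_const (by linarith)
  have hs : Tendsto (fun t : ℝ => t * (1 + 2 * z)) atTop atTop :=
    tendsto_id.atTop_mul_const (by linarith)
  have hlim := ((hG.tendsto.comp hr).mul (hF.tendsto.comp hs)).const_mul
    ((1 + z) ^ (-ρ) * (1 + 2 * z) ^ (-κ))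
  rw [show (1 + z) ^ (-ρ) * (1 + 2 * z) ^ (-κ) * (cG * cF) =
    cF * cG * ((1 + z) ^ (-ρ) * (1 + 2 * z) ^ (-κ)) by ring] at hlim
  refine hlim.congr' ?_
  filter_upwards [eventually_gt_atTop 0] with t ht
  exact (rpow_mul_integrand_eq ht hz.le).symm

theorem PowerLawDecay.integrableOn_integrand (hG : PowerLawDecay G ρ cG)
    (hF : PowerLawDecay F κ cF) (hκ : 0 ≤ κ) (hρκ : 1 < ρ + κ) (ht : 0 < t) :
    IntegrableOn (fun u => G (u + t) * F (2 * u + t)) (Ioi 0) := by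
  have h := (integrable_const_mul_iff (rpow_pos_of_pos ht (ρ + κ)).ne'.isUnit _).mp
    (hG.integrableOn_rescaled hF hκ hρκ ht)
  simpa only [mul_zero] using
    (integrableOn_Ioi_comp_mul_left_iff (fun u => G (u + t) * F (2 * u + t)) 0 ht).mp h

theorem PowerLawDecay.tendsto_rpow_mul_integral (hG : PowerLawDecay G ρ cG)
    (hF : PowerLawDecay F κ cF) (hκ : 0 ≤ κ) (hρκ : 1 < ρ + κ) :
    Tendsto (fun t => t ^ (ρ + κ - 1) * ∫ u in Ioi 0, G (u + t) * F (2 * u + t)) atTop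
      (𝓝 (cF * cG * ∫ z in Ioi 0, (1 + z) ^ (-ρ) * (1 + 2 * z) ^ (-κ))) := by
  refine (hG.tendsto_integral_rescaled hF hκ hρκ).congr' ?_
  filter_upwards [eventually_gt_atTop 0] with t ht
  have hsubst := integral_comp_mul_left_Ioi' (fun u => G (u + t) * F (2 * u + t)) 0 ht
  rw [mul_zero, smul_eq_mul] at hsubst
  rw [integral_const_mul, ← hsubst, rpow_sub_one ht.ne', div_mul_eq_mul_div, mul_div_assoc,
    mul_div_cancel_left₀ _ ht.ne']

end Rescaling

lemma tendsto_integral_exp_neg_mul_rpow_mul_comp_div {φ : ℝ → ℝ} {κ c M : ℝ} (hκ : -1 < κ)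
    (hφ : Measurable φ) (hφM : ∀ a > 0, |φ a| ≤ M) (hlim : Tendsto φ (𝓝[>] 0) (𝓝 c)) :
    Tendsto (fun s => ∫ x in Ioi 0, exp (-x) * x ^ κ * φ (x / s)) atTop
      (𝓝 (Gamma (κ + 1) * c)) := by
  have hΓ : IntegrableOn (fun x : ℝ => exp (-x) * x ^ κ) (Ioi 0) := by
    simpa using GammaIntegral_convergent (s := κ + 1) (by linarith)
  have hlimit : ∫ x in Ioi 0, exp (-x) * x ^ κ * c = Gamma (κ + 1) * c := by
    rw [integral_mul_const, Gamma_eq_integral (by linarith), add_sub_cancel_right]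
  rw [← hlimit]
  refine tendsto_integral_filter_of_dominated_convergence (fun x => exp (-x) * x ^ κ * M)
    (Eventually.of_forall fun s => (by fun_prop : Measurable fun x : ℝ =>
      exp (-x) * x ^ κ * φ (x / s)).aestronglyMeasurable) ?_ (hΓ.mul_const M) ?_
  · filter_upwards [eventually_gt_atTop 0] with s hs
    filter_upwards [self_mem_ae_restrict measurableSet_Ioi] with x (hx : 0 < x)
    rw [norm_mul, norm_of_nonneg (by positivity), norm_eq_abs]
    exact mul_le_mul_of_nonneg_left (hφM _ (div_pos hx hs)) (by positivity)
  · filter_upwards [self_mem_ae_restrict measurableSet_Ioi] with x (hx : 0 < x)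
    refine (hlim.comp ?_).const_mul _
    exact tendsto_nhdsWithin_iff.mpr ⟨tendsto_const_nhds.div_atTop tendsto_id,
      eventually_gt_atTop 0 |>.mono fun s hs => div_pos hx hs⟩

section Laplace

variable {Ω : Type*} [MeasurableSpace Ω] (μ : Measure Ω)

lemma monotone_measure_le [IsFiniteMeasure μ] (X : Ω → ℝ) :
    Monotone fun x => (μ {ω | X ω ≤ x}).toReal := fun _ _ hab =>
  ENNReal.toReal_mono (measure_ne_top _ _) (measure_mono fun _ h => le_trans h hab)

lemma lintegral_ofReal_exp_neg_eq [SFinite μ] {X : Ω → ℝ} (hX : Measurable X) :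
    ∫⁻ ω, ENNReal.ofReal (exp (-X ω)) ∂μ = ∫⁻ x, ENNReal.ofReal (exp (-x)) * μ {ω | X ω ≤ x} := by
  set k : Ω → ℝ → ℝ≥0∞ := fun ω x => {p : Ω × ℝ | X p.1 ≤ p.2}.indicator
    (fun p => ENNReal.ofReal (exp (-p.2))) (ω, x)
  have hk : Measurable (Function.uncurry k) :=
    (by fun_prop : Measurable fun p : Ω × ℝ => ENNReal.ofReal (exp (-p.2))).indicator
      (measurableSet_le (hX.comp measurable_fst) measurable_snd)
  have htail : ∀ a : ℝ, ∫⁻ x in Ici a, ENNReal.ofReal (exp (-x)) = ENNReal.ofReal (exp (-a)) :=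
    fun a => by
    have hint : IntegrableOn (fun x : ℝ => exp (-x)) (Ioi a) := by
      simpa using exp_neg_integrableOn_Ioi a one_pos
    rw [← setLIntegral_congr Ioi_ae_eq_Ici, ← integral_exp_neg_Ioi a,
      ofReal_integral_eq_lintegral_ofReal hint (ae_of_all _ fun x => (exp_pos _).le)]
  calc ∫⁻ ω, ENNReal.ofReal (exp (-X ω)) ∂μ = ∫⁻ ω, (∫⁻ x, k ω x) ∂μ := by
        refine lintegral_congr fun ω => ?_
        rw [← htail, ← lintegral_indicator measurableSet_Ici]
        rfl
    _ = ∫⁻ x, ∫⁻ ω, k ω x ∂μ := lintegral_lintegral_swap hk.aemeasurable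
    _ = ∫⁻ x, ENNReal.ofReal (exp (-x)) * μ {ω | X ω ≤ x} := by
        refine lintegral_congr fun x => ?_
        rw [← lintegral_indicator_const (measurableSet_le hX measurable_const)]
        rfl

lemma integral_exp_neg_eq_integral_exp_neg_mul_measure_le [IsFiniteMeasure μ]
    {X : Ω → ℝ} (hX : Measurable X) (hpos : ∀ᵐ ω ∂μ, 0 < X ω) :
    ∫ ω, exp (-X ω) ∂μ = ∫ x in Ioi 0, exp (-x) * (μ {ω | X ω ≤ x}).toReal := by
  have hm : Measurable fun x : ℝ => exp (-x) * (μ {ω | X ω ≤ x}).toReal :=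
    (by fun_prop : Measurable fun x : ℝ => exp (-x)).mul (monotone_measure_le μ X).measurable
  rw [integral_eq_lintegral_of_nonneg_ae (ae_of_all _ fun _ => (exp_pos _).le)
      (by fun_prop : Measurable fun ω => exp (-X ω)).aestronglyMeasurable,
    integral_eq_lintegral_of_nonneg_ae (ae_of_all _ fun _ => by positivity)
      hm.aestronglyMeasurable,
    lintegral_ofReal_exp_neg_eq μ hX, ← lintegral_indicator measurableSet_Ioi]
  congr 1
  refine lintegral_congr fun x => ?_
  by_cases hx : 0 < x
  · rw [indicator_of_mem (mem_Ioi.mpr hx), ENNReal.ofReal_mul (exp_pos _).le,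
      ENNReal.ofReal_toReal (measure_ne_top _ _)]
  · have hnull : μ {ω | X ω ≤ x} = 0 :=
      measure_mono_null (fun ω (h : X ω ≤ x) (hω : 0 < X ω) => hx (hω.trans_le h))
        (ae_iff.mp hpos)
    rw [indicator_of_notMem (show x ∉ Ioi 0 from hx), hnull, mul_zero]

variable {A : Ω → ℝ}

lemma integrable_exp_neg_mul [IsFiniteMeasure μ] (hA : Measurable A) (hApos : ∀ᵐ ω ∂μ, 0 ≤ A ω)
    {s : ℝ} (hs : 0 ≤ s) : Integrable (fun ω => exp (-(A ω) * s)) μ := by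
  refine Integrable.of_bound (by fun_prop : Measurable _).aestronglyMeasurable 1 ?_
  filter_upwards [hApos] with ω hω
  rw [norm_of_nonneg (exp_pos _).le, exp_le_one_iff]
  nlinarith

lemma antitoneOn_integral_exp_neg_mul [IsFiniteMeasure μ] (hA : Measurable A)
    (hApos : ∀ᵐ ω ∂μ, 0 ≤ A ω) : AntitoneOn (fun s => ∫ ω, exp (-(A ω) * s) ∂μ) (Ici 0) :=
  fun a (ha : 0 ≤ a) b (hb : 0 ≤ b) hab =>
  integral_mono_ae (integrable_exp_neg_mul μ hA hApos hb) (integrable_exp_neg_mul μ hA hApos ha)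
    (by filter_upwards [hApos] with ω hω; exact exp_le_exp.mpr (by nlinarith))

lemma rpow_mul_integral_exp_neg_mul_eq [IsFiniteMeasure μ] (hA : Measurable A)
    (hApos : ∀ᵐ ω ∂μ, 0 < A ω) (κ : ℝ) {s : ℝ} (hs : 0 < s) :
    s ^ κ * ∫ ω, exp (-(A ω) * s) ∂μ =
      ∫ x in Ioi 0, exp (-x) * x ^ κ * ((x / s) ^ (-κ) * (μ {ω | A ω ≤ x / s}).toReal) := by
  have hpos : ∀ᵐ ω ∂μ, 0 < A ω * s := hApos.mono fun ω hω => mul_pos hω hs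
  simp_rw [neg_mul]
  rw [integral_exp_neg_eq_integral_exp_neg_mul_measure_le μ (hA.mul_const s) hpos,
    ← integral_const_mul]
  refine setIntegral_congr_fun measurableSet_Ioi fun x (hx : 0 < x) => ?_
  have hset : {ω | A ω * s ≤ x} = {ω | A ω ≤ x / s} := by
    ext ω; exact (le_div_iff₀ hs).symm
  rw [hset, div_rpow hx.le hs.le, rpow_neg hx.le, rpow_neg hs.le]
  generalize (μ {ω | A ω ≤ x / s}).toReal = p
  field_simp

lemma tendsto_rpow_mul_integral_exp_neg_mul [IsProbabilityMeasure μ] (hA : Measurable A)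
    (hApos : ∀ᵐ ω ∂μ, 0 < A ω) {κ c : ℝ} (hκ : 0 ≤ κ)
    (htail : Tendsto (fun a => a ^ (-κ) * (μ {ω | A ω ≤ a}).toReal) (𝓝[>] 0) (𝓝 c)) :
    Tendsto (fun s => s ^ κ * ∫ ω, exp (-(A ω) * s) ∂μ) atTop (𝓝 (Gamma (κ + 1) * c)) := by
  obtain ⟨M, hM⟩ := exists_rpow_neg_mul_le_of_tendsto hκ (fun _ _ => measureReal_le_one) htail
  refine (tendsto_integral_exp_neg_mul_rpow_mul_comp_div
    (φ := fun a => a ^ (-κ) * (μ {ω | A ω ≤ a}).toReal) (by linarith)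
    ((measurable_id.pow_const _).mul (monotone_measure_le μ A).measurable)
    (fun a ha => (abs_of_nonneg (by positivity)).trans_le (hM a ha)) htail).congr' ?_
  filter_upwards [eventually_gt_atTop 0] with s hs
  exact (rpow_mul_integral_exp_neg_mul_eq μ hA hApos κ hs).symm

lemma powerLawDecay_integral_exp_neg_mul [IsProbabilityMeasure μ] (hA : Measurable A)
    (hApos : ∀ᵐ ω ∂μ, 0 < A ω) {κ c : ℝ} (hκ : 0 ≤ κ)
    (htail : Tendsto (fun a => a ^ (-κ) * (μ {ω | A ω ≤ a}).toReal) (𝓝[>] 0) (𝓝 c)) :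
    PowerLawDecay (fun s => ∫ ω, exp (-(A ω) * s) ∂μ) κ (Gamma (κ + 1) * c) := by
  have hanti := antitoneOn_integral_exp_neg_mul μ hA (hApos.mono fun _ h => h.le)
  refine .of_le_one hκ (fun _ _ => integral_nonneg fun _ => (exp_pos _).le) (fun s hs => ?_)
    (hanti.mono Ioi_subset_Ici_self) (tendsto_rpow_mul_integral_exp_neg_mul μ hA hApos hκ htail)
  simpa using hanti self_mem_Ici (mem_Ici.mpr hs.le) hs.le

lemma powerLawDecay_measure_lt [IsProbabilityMeasure μ] (R : Ω → ℝ) {ρ c : ℝ} (hρ : 0 ≤ ρ)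
    (htail : Tendsto (fun r => r ^ ρ * (μ {ω | r < R ω}).toReal) atTop (𝓝 c)) :
    PowerLawDecay (fun r => (μ {ω | r < R ω}).toReal) ρ c :=
  .of_le_one hρ (fun _ _ => ENNReal.toReal_nonneg) (fun _ _ => measureReal_le_one)
    (fun _ _ _ _ hab => ENNReal.toReal_mono (measure_ne_top _ _)
      (measure_mono fun ω (h : _ < R ω) => hab.trans_lt h)) htail

end Laplace

theorem stmt_9_general {Ω : Type*} [MeasurableSpace Ω] (P : Measure Ω) [IsProbabilityMeasure P]
    (A R : Ω → ℝ) (hAmeas : Measurable A) (hApos : ∀ᵐ ω ∂P, 0 < A ω)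
    (ρ κ c_ρ c_κ : ℝ) (hρ : 0 < ρ) (hκ : 0 < κ) (hsum1 : 1 < ρ + κ)
    (htailR : Tendsto (fun r : ℝ => r ^ ρ * (P {ω | r < R ω}).toReal) atTop (nhds c_ρ))
    (htailA : Tendsto (fun a : ℝ => a ^ (-κ) * (P {ω | A ω ≤ a}).toReal)
      (nhdsWithin 0 (Set.Ioi 0)) (nhds c_κ)) :
    (∀ t > (0:ℝ), IntegrableOn
        (fun u : ℝ => (P {ω | u + t < R ω}).toReal *
          ∫ ω, Real.exp (-(A ω) * (2 * u + t)) ∂P) (Set.Ioi 0)) ∧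
    IntegrableOn (fun z : ℝ => (1 + z) ^ (-ρ) * (1 + 2 * z) ^ (-κ)) (Set.Ioi 0) ∧
    Tendsto (fun t : ℝ =>
        t ^ (ρ + κ - 1) *
          ∫ u in Set.Ioi (0:ℝ), (P {ω | u + t < R ω}).toReal *
            ∫ ω, Real.exp (-(A ω) * (2 * u + t)) ∂P) atTop
      (nhds (Real.Gamma (κ + 1) * c_κ * c_ρ *
        ∫ z in Set.Ioi (0:ℝ), (1 + z) ^ (-ρ) * (1 + 2 * z) ^ (-κ))) := by
  have hR := powerLawDecay_measure_lt P R hρ.le htailR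
  have hA := powerLawDecay_integral_exp_neg_mul P hAmeas hApos hκ.le htailA
  exact ⟨fun t ht => hR.integrableOn_integrand hA hκ.le hsum1 ht,
    integrableOn_one_add_rpow_neg_mul_one_add_two_mul_rpow_neg hκ.le hsum1,
    hR.tendsto_rpow_mul_integral hA hκ.le hsum1⟩

/-- covariance asymptotics for the exponentially damped pulse. Let `A > 0`
and `R > 0` be independent with `r^ρ P(R > r) → c_ρ` (`r → ∞`) and
`a^{-κ} P(A ≤ a) → c_κ` (`a → 0+`), where `ρ, κ > 0`, `c_ρ, c_κ > 0`, `1 < ρ+κ < 2`. Then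
`t^{ρ+κ-1} ∫_0^∞ P(R > u+t) E[e^{-A(2u+t)}] du
  → Γ(κ+1) c_κ c_ρ ∫_0^∞ (1+z)^{-ρ} (1+2z)^{-κ} dz`, and both integrals are finite. -/
theorem stmt_9 {Ω : Type*} [MeasurableSpace Ω] (P : Measure Ω) [IsProbabilityMeasure P]
    (A R : Ω → ℝ) (hAmeas : Measurable A) (hRmeas : Measurable R)
    (hApos : ∀ᵐ ω ∂P, 0 < A ω) (hRpos : ∀ᵐ ω ∂P, 0 < R ω)
    (hindep : IndepFun A R P)
    (ρ κ c_ρ c_κ : ℝ) (hρ : 0 < ρ) (hκ : 0 < κ) (hcρ : 0 < c_ρ) (hcκ : 0 < c_κ)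
    (hsum1 : 1 < ρ + κ) (hsum2 : ρ + κ < 2)
    (htailR : Tendsto (fun r : ℝ => r ^ ρ * (P {ω | r < R ω}).toReal) atTop (nhds c_ρ))
    (htailA : Tendsto (fun a : ℝ => a ^ (-κ) * (P {ω | A ω ≤ a}).toReal)
      (nhdsWithin 0 (Set.Ioi 0)) (nhds c_κ)) :
    (∀ t > (0:ℝ), IntegrableOn
        (fun u : ℝ => (P {ω | u + t < R ω}).toReal *
          ∫ ω, Real.exp (-(A ω) * (2 * u + t)) ∂P) (Set.Ioi 0)) ∧
    IntegrableOn (fun z : ℝ => (1 + z) ^ (-ρ) * (1 + 2 * z) ^ (-κ)) (Set.Ioi 0) ∧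
    Tendsto (fun t : ℝ =>
        t ^ (ρ + κ - 1) *
          ∫ u in Set.Ioi (0:ℝ), (P {ω | u + t < R ω}).toReal *
            ∫ ω, Real.exp (-(A ω) * (2 * u + t)) ∂P) atTop
      (nhds (Real.Gamma (κ + 1) * c_κ * c_ρ *
        ∫ z in Set.Ioi (0:ℝ), (1 + z) ^ (-ρ) * (1 + 2 * z) ^ (-κ))) :=
  stmt_9_general P A R hAmeas hApos ρ κ c_ρ c_κ hρ hκ hsum1 htailR htailA
end

section
/- For every α ∈ (1,2), the function r ↦ (e^{ir} − 1 − ir) r^{−1−α} is Lebesgue integrable on (0,∞) as a complex-valued function, and ∫_0^∞ (e^{ir} − 1 − ir) r^{−1−α} dr = ( Γ(2−α) / (α(α−1)) ) · ( cos(πα/2) − i·sin(πα/2) ). -/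
/-!
For `Re c < 0`, integrating by parts twice against the weight `r ^ (-1 - α)` turns
`∫₀^∞ (e^{rc} - 1 - rc) r^{-1-α} dr` into `c² / (α (α - 1)) ∫₀^∞ e^{rc} r^{1-α} dr`, a Gamma
integral with complex scale, equal to `Γ(2 - α) (-c)^{α-2}`; altogether the integral is
`Γ(-α) (-c)^α`. The Gamma integral with complex scale follows from the real one by the identity
theorem, since both sides are holomorphic in `c`. Finally, for `c` near `i` in the closed left
half-plane the integrands are dominated by one integrable function, so letting `c → i` gives the
value `Γ(-α) (-i)^α = Γ(-α) e^{-iπα/2}`.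
-/

open MeasureTheory Filter Set
open scoped Real Topology
open Complex ProbabilityTheory

lemma hasDerivAt_ofReal_mul (c : ℂ) (r : ℝ) : HasDerivAt (fun r : ℝ => (r : ℂ) * c) c r := by
  simpa using (hasDerivAt_id (r : ℂ)).comp_ofReal.mul_const c

section ExpBounds

variable {w : ℂ}

lemma norm_cexp_le_one (hw : w.re ≤ 0) : ‖cexp w‖ ≤ 1 := by
  rw [norm_exp]
  exact Real.exp_le_one_iff.2 hw

lemma re_ofReal_mul_nonpos {t : ℝ} (ht : 0 ≤ t) (hw : w.re ≤ 0) : (t * w).re ≤ 0 := by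
  rw [re_ofReal_mul]
  exact mul_nonpos_of_nonneg_of_nonpos ht hw

lemma norm_cexp_sub_one_le_two (hw : w.re ≤ 0) : ‖cexp w - 1‖ ≤ 2 := by
  refine (norm_sub_le _ _).trans ?_
  rw [norm_one]
  linarith [norm_cexp_le_one hw]

lemma norm_cexp_sub_one_le (hw : w.re ≤ 0) : ‖cexp w - 1‖ ≤ ‖w‖ := by
  have h := norm_image_sub_le_of_norm_deriv_le_segment_01'
    (f := fun t : ℝ => cexp (t * w)) (C := ‖w‖)
    (fun t _ => (hasDerivAt_ofReal_mul w t).cexp.hasDerivWithinAt) fun t ht => ?_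
  · simpa using h
  · rw [norm_mul]
    exact mul_le_of_le_one_left (norm_nonneg w) (norm_cexp_le_one (re_ofReal_mul_nonpos ht.1 hw))

lemma norm_cexp_sub_one_sub_le (hw : w.re ≤ 0) : ‖cexp w - 1 - w‖ ≤ ‖w‖ ^ 2 := by
  have h := norm_image_sub_le_of_norm_deriv_le_segment_01'
    (f := fun t : ℝ => cexp (t * w) - t * w) (f' := fun t : ℝ => (cexp (t * w) - 1) * w)
    (C := ‖w‖ ^ 2) (fun t _ => ?_) fun t ht => ?_
  · simpa [sub_right_comm] using h
  · exact (((hasDerivAt_ofReal_mul w t).cexp.sub (hasDerivAt_ofReal_mul w t)).congr_deriv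
      (by ring)).hasDerivWithinAt
  · rw [norm_mul, sq]
    refine mul_le_mul_of_nonneg_right
      ((norm_cexp_sub_one_le (re_ofReal_mul_nonpos ht.1 hw)).trans ?_) (norm_nonneg w)
    rw [norm_mul, norm_real, Real.norm_of_nonneg ht.1]
    exact mul_le_of_le_one_left (norm_nonneg w) ht.2.le

end ExpBounds

section RayBounds

variable {c : ℂ} {r : ℝ}

lemma norm_ofReal_mul_of_nonneg (hr : 0 ≤ r) : ‖(r : ℂ) * c‖ = r * ‖c‖ := by
  rw [norm_mul, norm_real, Real.norm_of_nonneg hr]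

lemma norm_cexp_ofReal_mul_sub_one_le (hc : c.re ≤ 0) (hr : 0 ≤ r) :
    ‖cexp (r * c) - 1‖ ≤ ‖c‖ * r := by
  refine (norm_cexp_sub_one_le (re_ofReal_mul_nonpos hr hc)).trans_eq ?_
  rw [norm_ofReal_mul_of_nonneg hr, mul_comm]

lemma norm_cexp_ofReal_mul_sub_one_sub_le (hc : c.re ≤ 0) (hr : 0 ≤ r) :
    ‖cexp (r * c) - 1 - r * c‖ ≤ ‖c‖ ^ 2 * r ^ 2 := by
  refine (norm_cexp_sub_one_sub_le (re_ofReal_mul_nonpos hr hc)).trans_eq ?_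
  rw [norm_ofReal_mul_of_nonneg hr]
  ring

lemma norm_cexp_ofReal_mul_sub_one_sub_le_mul (hc : c.re ≤ 0) (hr : 1 ≤ r) :
    ‖cexp (r * c) - 1 - r * c‖ ≤ (2 + ‖c‖) * r := by
  have h := norm_cexp_sub_one_le_two (re_ofReal_mul_nonpos (zero_le_one.trans hr) hc)
  calc ‖cexp (r * c) - 1 - r * c‖ ≤ 2 + r * ‖c‖ := by
        refine (norm_sub_le _ _).trans ?_
        rw [norm_ofReal_mul_of_nonneg (zero_le_one.trans hr)]
        linarith
    _ ≤ (2 + ‖c‖) * r := by nlinarith [norm_nonneg c]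

end RayBounds

section PowerWeights

variable {E : Type*} [NormedAddCommGroup E] {f : ℝ → E} {u u' : ℝ → ℂ} {p q k β C C₀ C₁ r : ℝ}

lemma continuousOn_ofReal_rpow (p : ℝ) : ContinuousOn (fun r : ℝ => ((r ^ p : ℝ) : ℂ)) (Ioi 0) :=
  continuous_ofReal.comp_continuousOn
    (continuousOn_id.rpow_const fun _ hr => Or.inl (ne_of_gt hr))

lemma norm_mul_ofReal_rpow_le {z : ℂ} (hr : 0 < r) (h : ‖z‖ ≤ C * r ^ p) :
    ‖z * (r ^ q : ℝ)‖ ≤ C * r ^ (p + q) := by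
  rw [norm_mul, norm_real, Real.norm_of_nonneg (Real.rpow_nonneg hr.le q), Real.rpow_add hr,
    ← mul_assoc]
  exact mul_le_mul_of_nonneg_right h (Real.rpow_nonneg hr.le q)

lemma integrableOn_Ioi_ite_rpow (hp : -1 < p) (hq : q < -1) :
    IntegrableOn (fun r : ℝ => if r ≤ 1 then C₀ * r ^ p else C₁ * r ^ q) (Ioi 0) := by
  rw [← Ioc_union_Ioi_eq_Ioi zero_le_one, integrableOn_union]
  constructor
  · refine IntegrableOn.congr_fun (f := fun r => C₀ * r ^ p)
      ((intervalIntegral.intervalIntegrable_rpow' hp).1.const_mul C₀) (fun r hr => ?_)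
      measurableSet_Ioc
    simp [hr.2]
  · refine IntegrableOn.congr_fun (f := fun r => C₁ * r ^ q)
      (((integrableOn_Ioi_rpow_iff zero_lt_one).2 hq).const_mul C₁) (fun r (hr : 1 < r) => ?_)
      measurableSet_Ioi
    simp [not_le.2 hr]

lemma integrableOn_Ioi_of_norm_le_rpow (hp : -1 < p) (hq : q < -1)
    (hf : AEStronglyMeasurable f (volume.restrict (Ioi 0)))
    (h₀ : ∀ r ∈ Ioc 0 1, ‖f r‖ ≤ C₀ * r ^ p) (h₁ : ∀ r ∈ Ioi 1, ‖f r‖ ≤ C₁ * r ^ q) :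
    IntegrableOn f (Ioi 0) := by
  refine (integrableOn_Ioi_ite_rpow (C₀ := C₀) (C₁ := C₁) hp hq).mono' hf ?_
  filter_upwards [ae_restrict_mem measurableSet_Ioi] with r (hr : 0 < r)
  split_ifs with h
  exacts [h₀ r ⟨hr, h⟩, h₁ r (not_le.1 h)]

lemma tendsto_nhdsGT_zero_of_norm_le_rpow (hp : 0 < p) (h : ∀ r ∈ Ioc 0 1, ‖f r‖ ≤ C * r ^ p) :
    Tendsto f (𝓝[>] 0) (𝓝 0) := by
  have hpow : Tendsto (fun r : ℝ => C * r ^ p) (𝓝[>] 0) (𝓝 0) := by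
    simpa [Real.zero_rpow hp.ne'] using
      ((Real.continuousAt_rpow_const 0 p (Or.inr hp.le)).tendsto.const_mul C).mono_left
        nhdsWithin_le_nhds
  refine squeeze_zero_norm' ?_ hpow
  filter_upwards [Ioo_mem_nhdsGT zero_lt_one] with r hr
  exact h r ⟨hr.1, hr.2.le⟩

lemma tendsto_atTop_zero_of_norm_le_rpow (hq : q < 0) (h : ∀ r ∈ Ioi 1, ‖f r‖ ≤ C * r ^ q) :
    Tendsto f atTop (𝓝 0) := by
  have hpow : Tendsto (fun r : ℝ => C * r ^ q) atTop (𝓝 0) := by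
    simpa using (tendsto_rpow_neg_atTop (neg_pos.2 hq)).const_mul C
  refine squeeze_zero_norm' ?_ hpow
  filter_upwards [eventually_gt_atTop 1] with r hr
  exact h r hr

lemma integrableOn_mul_rpow_of_norm_le (hβk : β < k) (hkβ : k < β + 1)
    (hu : ContinuousOn u (Ioi 0))
    (h₀ : ∀ r ∈ Ioc 0 1, ‖u r‖ ≤ C₀ * r ^ k) (h₁ : ∀ r ∈ Ioi 1, ‖u r‖ ≤ C₁ * r ^ (k - 1)) :
    IntegrableOn (fun r : ℝ => u r * (r ^ (-1 - β) : ℝ)) (Ioi 0) := by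
  refine integrableOn_Ioi_of_norm_le_rpow (p := k + (-1 - β)) (q := k - 1 + (-1 - β))
    (by linarith) (by linarith) ?_ (fun r hr => norm_mul_ofReal_rpow_le hr.1 (h₀ r hr))
    fun r (hr : 1 < r) => norm_mul_ofReal_rpow_le (zero_lt_one.trans hr) (h₁ r hr)
  exact (hu.mul (continuousOn_ofReal_rpow _)).aestronglyMeasurable measurableSet_Ioi

/-- Integration by parts against `d(r ^ (-β)) = -β r ^ (-1 - β) dr`. -/
theorem mul_integral_mul_rpow_eq (hβk : β < k) (hkβ : k < β + 1)
    (hu : ∀ r ∈ Ioi 0, HasDerivAt u (u' r) r)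
    (h₀ : ∀ r ∈ Ioc 0 1, ‖u r‖ ≤ C₀ * r ^ k) (h₁ : ∀ r ∈ Ioi 1, ‖u r‖ ≤ C₁ * r ^ (k - 1))
    (hu' : IntegrableOn (fun r : ℝ => u' r * (r ^ (-β) : ℝ)) (Ioi 0)) :
    β * ∫ r in Ioi 0, u r * (r ^ (-1 - β) : ℝ) = ∫ r in Ioi 0, u' r * (r ^ (-β) : ℝ) := by
  have hv : ∀ r ∈ Ioi (0 : ℝ), HasDerivAt (fun r : ℝ => ((r ^ (-β) : ℝ) : ℂ))
      (-β * (r ^ (-1 - β) : ℝ)) r := fun r hr => by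
    convert (Real.hasDerivAt_rpow_const (p := -β) (Or.inl (ne_of_gt hr))).ofReal_comp using 1
    push_cast; ring_nf
  have hint := integrableOn_mul_rpow_of_norm_le hβk hkβ
    (fun r hr => (hu r hr).continuousAt.continuousWithinAt) h₀ h₁
  have hIBP := integral_Ioi_mul_deriv_eq_deriv_mul hu hv ?_ hu'
    (tendsto_nhdsGT_zero_of_norm_le_rpow (p := k + -β) (by linarith)
      fun r hr => norm_mul_ofReal_rpow_le hr.1 (h₀ r hr))
    (tendsto_atTop_zero_of_norm_le_rpow (q := k - 1 + -β) (by linarith)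
      fun r (hr : 1 < r) => norm_mul_ofReal_rpow_le (zero_lt_one.trans hr) (h₁ r hr))
  · have hmul : ∫ r in Ioi 0, u r * (-β * (r ^ (-1 - β) : ℝ)) =
        -β * ∫ r in Ioi 0, u r * (r ^ (-1 - β) : ℝ) := by
      rw [← integral_const_mul]
      exact setIntegral_congr_fun measurableSet_Ioi fun r _ => by ring
    linear_combination hmul - hIBP
  · refine IntegrableOn.congr_fun (hint.const_mul (-(β : ℂ))) (fun r _ => ?_) measurableSet_Ioi
    simp only [Pi.mul_apply]
    ring

end PowerWeights

section GammaIntegral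

lemma integrableOn_cexp_mul_rpow {p : ℝ} (hp : -1 < p) {c : ℂ} (hc : c.re < 0) :
    IntegrableOn (fun t : ℝ => cexp (t * c) * (t ^ p : ℝ)) (Ioi 0) := by
  refine (integrableOn_rpow_mul_exp_neg_mul_rpow hp one_pos (neg_pos.2 hc)).mono'
    (((by fun_prop : Continuous fun t : ℝ => cexp (t * c)).continuousOn.mul
      (continuousOn_ofReal_rpow p)).aestronglyMeasurable measurableSet_Ioi) ?_
  filter_upwards [ae_restrict_mem measurableSet_Ioi] with t (ht : 0 < t)
  rw [norm_mul, norm_exp, norm_real, Real.norm_of_nonneg (Real.rpow_nonneg ht.le _),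
    Real.rpow_one, re_ofReal_mul]
  exact le_of_eq (by ring_nf)

lemma integral_cexp_mul_rpow_of_neg {s : ℝ} (hs : 0 < s) {x : ℝ} (hx : x < 0) :
    ∫ t : ℝ in Ioi 0, cexp (t * x) * (t ^ (s - 1) : ℝ) =
      Real.Gamma s * (-(x : ℂ)) ^ (-(s : ℂ)) := by
  have h := Real.integral_rpow_mul_exp_neg_mul_Ioi hs (neg_pos.2 hx)
  rw [← ofReal_neg, ← ofReal_neg, ← ofReal_cpow (neg_pos.2 hx).le, ← ofReal_mul,
    Real.rpow_neg (neg_pos.2 hx).le, ← Real.inv_rpow (neg_pos.2 hx).le, ← one_div, mul_comm, ← h,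
    ← integral_complex_ofReal]
  refine setIntegral_congr_fun measurableSet_Ioi fun t _ => ?_
  push_cast
  ring_nf

/-- Both sides are holomorphic in `c` on the left half-plane (the left one as the complex moment
generating function of the measure `t ^ (s - 1) dt` on `(0, ∞)`) and they agree on the negative
reals. -/
theorem integral_cexp_mul_rpow {s : ℝ} (hs : 0 < s) {c : ℂ} (hc : c.re < 0) :
    ∫ t : ℝ in Ioi 0, cexp (t * c) * (t ^ (s - 1) : ℝ) = Real.Gamma s * (-c) ^ (-(s : ℂ)) := by
  set μ := (volume.restrict (Ioi (0 : ℝ))).withDensity fun t => ENNReal.ofReal (t ^ (s - 1))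
  have hdens : Measurable fun t : ℝ => ENNReal.ofReal (t ^ (s - 1)) := by fun_prop
  have hfin : ∀ᵐ t ∂(volume.restrict (Ioi (0 : ℝ))), ENNReal.ofReal (t ^ (s - 1)) < ⊤ :=
    ae_of_all _ fun _ => ENNReal.ofReal_lt_top
  have hmgf (z : ℂ) :
      complexMGF id μ z = ∫ t : ℝ in Ioi 0, cexp (t * z) * (t ^ (s - 1) : ℝ) := by
    rw [complexMGF, integral_withDensity_eq_integral_toReal_smul hdens hfin]
    refine setIntegral_congr_fun measurableSet_Ioi fun t ht => ?_
    rw [ENNReal.toReal_ofReal (Real.rpow_nonneg (le_of_lt ht) _), real_smul, id, mul_comm z,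
      mul_comm]
  have hU : {z : ℂ | z.re < 0} ⊆ {z | z.re ∈ interior (integrableExpSet id μ)} := by
    intro z (hz : z.re < 0)
    refine interior_maximal (fun u (hu : u < 0) => ?_) isOpen_Iio hz
    rw [integrableExpSet, mem_ofPred_eq, integrable_withDensity_iff_integrable_smul' hdens hfin]
    refine (integrableOn_rpow_mul_exp_neg_mul_rpow (s := s - 1) (by linarith) one_pos
      (neg_pos.2 hu)).congr_fun (fun t (ht : 0 < t) => ?_) measurableSet_Ioi
    simp [ENNReal.toReal_ofReal (Real.rpow_nonneg ht.le _)]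
  have hg : AnalyticOnNhd ℂ (fun z : ℂ => Real.Gamma s * (-z) ^ (-(s : ℂ))) {z | z.re < 0} :=
    DifferentiableOn.analyticOnNhd (fun z (hz : z.re < 0) =>
      ((differentiableAt_id.neg.cpow_const (Or.inl (by simpa using hz))).const_mul
        _).differentiableWithinAt) (isOpen_lt continuous_re continuous_const)
  have hreal : ∃ᶠ z in 𝓝[≠] (-1 : ℂ), complexMGF id μ z = Real.Gamma s * (-z) ^ (-(s : ℂ)) := by
    have hofReal : Tendsto ((↑) : ℝ → ℂ) (𝓝[≠] (-1)) (𝓝[≠] (-1)) :=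
      tendsto_nhdsWithin_iff.2 ⟨(continuous_ofReal.tendsto' _ _ (by simp)).mono_left
        nhdsWithin_le_nhds, eventually_nhdsWithin_of_forall fun x hx => by
          simpa [← ofReal_one, ← ofReal_neg, ofReal_inj] using hx⟩
    refine hofReal.frequently (Eventually.frequently ?_)
    filter_upwards [nhdsWithin_le_nhds (Iio_mem_nhds (by norm_num : (-1 : ℝ) < 0))] with x hx
    rw [hmgf]
    exact integral_cexp_mul_rpow_of_neg hs hx
  rw [← hmgf]
  exact (analyticOnNhd_complexMGF.mono hU).eqOn_of_preconnected_of_frequently_eq hg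
    (convex_halfSpace_re_lt 0).isPreconnected (by simp) hreal hc

end GammaIntegral

section Evaluation

variable {c : ℂ} {α β : ℝ}

lemma integrableOn_cexp_sub_one_mul_rpow (hβ0 : 0 < β) (hβ1 : β < 1) (hc : c.re ≤ 0) :
    IntegrableOn (fun r : ℝ => (cexp (r * c) - 1) * (r ^ (-1 - β) : ℝ)) (Ioi 0) :=
  integrableOn_mul_rpow_of_norm_le (k := 1) (C₀ := ‖c‖) (C₁ := 2) hβ1 (by linarith)
    (by fun_prop : Continuous fun r : ℝ => cexp (r * c) - 1).continuousOn
    (fun r hr => by simpa using norm_cexp_ofReal_mul_sub_one_le hc hr.1.le)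
    fun r (hr : 1 < r) => by
      simpa using norm_cexp_sub_one_le_two (re_ofReal_mul_nonpos (zero_le_one.trans hr.le) hc)

lemma integrableOn_cexp_sub_one_sub_mul_rpow (hα1 : 1 < α) (hα2 : α < 2) (hc : c.re ≤ 0) :
    IntegrableOn (fun r : ℝ => (cexp (r * c) - 1 - r * c) * (r ^ (-1 - α) : ℝ)) (Ioi 0) :=
  integrableOn_mul_rpow_of_norm_le (k := 2) (C₀ := ‖c‖ ^ 2) (C₁ := 2 + ‖c‖) hα2 (by linarith)
    (by fun_prop : Continuous fun r : ℝ => cexp (r * c) - 1 - r * c).continuousOn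
    (fun r hr => by simpa using norm_cexp_ofReal_mul_sub_one_sub_le hc hr.1.le)
    fun r (hr : 1 < r) => by
      simpa [show (2 : ℝ) - 1 = 1 by norm_num] using
        norm_cexp_ofReal_mul_sub_one_sub_le_mul hc hr.le

theorem integral_cexp_sub_one_mul_rpow (hβ0 : 0 < β) (hβ1 : β < 1) (hc : c.re < 0) :
    ∫ r : ℝ in Ioi 0, (cexp (r * c) - 1) * (r ^ (-1 - β) : ℝ) =
      Real.Gamma (-β) * (-c) ^ (β : ℂ) := by
  have hIBP := mul_integral_mul_rpow_eq (k := 1) (C₀ := ‖c‖) (C₁ := 2)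
    (u := fun r : ℝ => cexp (r * c) - 1) (u' := fun r => cexp (r * c) * c) hβ1 (by linarith)
    (fun r _ => by simpa using ((hasDerivAt_ofReal_mul c r).cexp.sub_const 1))
    (fun r hr => by simpa using norm_cexp_ofReal_mul_sub_one_le hc.le hr.1.le)
    (fun r (hr : 1 < r) => by
      simpa using norm_cexp_sub_one_le_two (re_ofReal_mul_nonpos (zero_le_one.trans hr.le) hc.le))
    (IntegrableOn.congr_fun ((integrableOn_cexp_mul_rpow (p := -β) (by linarith) hc).const_mul c)
      (fun r _ => by ring) measurableSet_Ioi)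
  have hGamma : ∫ r : ℝ in Ioi 0, cexp (r * c) * c * (r ^ (-β) : ℝ) =
      c * (Real.Gamma (1 - β) * (-c) ^ (-((1 - β : ℝ) : ℂ))) := by
    rw [← integral_cexp_mul_rpow (by linarith) hc, ← integral_const_mul]
    refine setIntegral_congr_fun measurableSet_Ioi fun r _ => ?_
    ring_nf
  have hΓ : Real.Gamma (1 - β) = -β * Real.Gamma (-β) := by
    rw [← Real.Gamma_add_one (neg_ne_zero.2 hβ0.ne'), neg_add_eq_sub]
  have hne : -c ≠ 0 := fun h => by simp [neg_eq_zero.1 h] at hc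
  have hcpow : (-c) ^ (-((1 - β : ℝ) : ℂ)) = (-c) ^ (β : ℂ) / (-c) := by
    rw [show -((1 - β : ℝ) : ℂ) = β - 1 by push_cast; ring, cpow_sub _ _ hne, cpow_one]
  apply mul_left_cancel₀ (ofReal_ne_zero.2 hβ0.ne')
  rw [hIBP, hGamma, hΓ, hcpow]
  have hc0 : c ≠ 0 := neg_ne_zero.1 hne
  field_simp
  push_cast
  ring

theorem integral_cexp_sub_one_sub_mul_rpow (hα1 : 1 < α) (hα2 : α < 2) (hc : c.re < 0) :
    ∫ r : ℝ in Ioi 0, (cexp (r * c) - 1 - r * c) * (r ^ (-1 - α) : ℝ) =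
      Real.Gamma (-α) * (-c) ^ (α : ℂ) := by
  have hIBP := mul_integral_mul_rpow_eq (k := 2) (C₀ := ‖c‖ ^ 2) (C₁ := 2 + ‖c‖)
    (u := fun r : ℝ => cexp (r * c) - 1 - r * c) (u' := fun r => (cexp (r * c) - 1) * c)
    hα2 (by linarith)
    (fun r _ => (((hasDerivAt_ofReal_mul c r).cexp.sub_const 1).sub
      (hasDerivAt_ofReal_mul c r)).congr_deriv (by ring))
    (fun r hr => by simpa using norm_cexp_ofReal_mul_sub_one_sub_le hc.le hr.1.le)
    (fun r (hr : 1 < r) => by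
      simpa [show (2 : ℝ) - 1 = 1 by norm_num] using
        norm_cexp_ofReal_mul_sub_one_sub_le_mul hc.le hr.le)
    (IntegrableOn.congr_fun
      ((integrableOn_cexp_sub_one_mul_rpow (β := α - 1) (by linarith) (by linarith)
        hc.le).const_mul c)
      (fun r _ => by ring_nf) measurableSet_Ioi)
  have hinner : ∫ r : ℝ in Ioi 0, (cexp (r * c) - 1) * c * (r ^ (-α) : ℝ) =
      c * (Real.Gamma (-(α - 1)) * (-c) ^ ((α - 1 : ℝ) : ℂ)) := by
    rw [← integral_cexp_sub_one_mul_rpow (by linarith) (by linarith) hc, ← integral_const_mul]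
    refine setIntegral_congr_fun measurableSet_Ioi fun r _ => ?_
    ring_nf
  have hΓ : Real.Gamma (-(α - 1)) = -α * Real.Gamma (-α) := by
    rw [← Real.Gamma_add_one (by linarith : -α ≠ 0)]
    ring_nf
  have hne : -c ≠ 0 := fun h => by simp [neg_eq_zero.1 h] at hc
  have hcpow : (-c) ^ ((α - 1 : ℝ) : ℂ) = (-c) ^ (α : ℂ) / (-c) := by
    rw [ofReal_sub, ofReal_one, cpow_sub _ _ hne, cpow_one]
  apply mul_left_cancel₀ (ofReal_ne_zero.2 (by linarith : α ≠ 0))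
  rw [hIBP, hinner, hΓ, hcpow]
  have hc0 : c ≠ 0 := neg_ne_zero.1 hne
  field_simp
  push_cast
  ring

lemma continuousWithinAt_integral_cexp_sub_one_sub_mul_rpow (hα1 : 1 < α) (hα2 : α < 2)
    (c₀ : ℂ) :
    ContinuousWithinAt
      (fun c : ℂ => ∫ r : ℝ in Ioi 0, (cexp (r * c) - 1 - r * c) * (r ^ (-1 - α) : ℝ))
      {c | c.re ≤ 0} c₀ := by
  set R := ‖c₀‖ + 1
  refine continuousWithinAt_of_dominated
    (bound := fun r : ℝ => if r ≤ 1 then R ^ 2 * r ^ (1 - α) else (2 + R) * r ^ (-α))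
    (eventually_nhdsWithin_of_forall fun c hc =>
      (integrableOn_cexp_sub_one_sub_mul_rpow hα1 hα2 hc).aestronglyMeasurable) ?_
    (integrableOn_Ioi_ite_rpow (by linarith) (by linarith))
    (ae_of_all _ fun r => (by fun_prop : Continuous fun c : ℂ =>
      (cexp (r * c) - 1 - r * c) * (r ^ (-1 - α) : ℝ)).continuousWithinAt)
  filter_upwards [self_mem_nhdsWithin, nhdsWithin_le_nhds (Metric.ball_mem_nhds c₀ one_pos)]
    with c (hc : c.re ≤ 0) hcc₀
  have hcR : ‖c‖ ≤ R := by
    have := norm_le_norm_add_norm_sub' c c₀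
    rw [Metric.mem_ball, dist_eq_norm] at hcc₀
    linarith
  filter_upwards [ae_restrict_mem measurableSet_Ioi] with r (hr : 0 < r)
  split_ifs with h
  · refine (norm_mul_ofReal_rpow_le (C := R ^ 2) (p := 2) hr ?_).trans_eq (by ring_nf)
    rw [Real.rpow_two]
    refine (norm_cexp_ofReal_mul_sub_one_sub_le hc hr.le).trans ?_
    gcongr
  · refine (norm_mul_ofReal_rpow_le (C := 2 + R) (p := 1) hr ?_).trans_eq (by ring_nf)
    rw [Real.rpow_one]
    refine (norm_cexp_ofReal_mul_sub_one_sub_le_mul hc (not_le.1 h).le).trans ?_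
    gcongr

end Evaluation

lemma Real.Gamma_two_sub {α : ℝ} (hα0 : α ≠ 0) (hα1 : α ≠ 1) :
    Real.Gamma (2 - α) = α * (α - 1) * Real.Gamma (-α) := by
  rw [show 2 - α = (1 - α) + 1 by ring, Real.Gamma_add_one (sub_ne_zero.2 hα1.symm),
    show 1 - α = -α + 1 by ring, Real.Gamma_add_one (neg_ne_zero.2 hα0)]
  ring

lemma Complex.neg_I_cpow_ofReal (α : ℝ) :
    (-I) ^ (α : ℂ) = (Real.cos (π * α / 2) : ℂ) - (Real.sin (π * α / 2) : ℂ) * I := by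
  rw [cpow_def_of_ne_zero (neg_ne_zero.2 I_ne_zero), log_neg_I,
    show -(π / 2 : ℂ) * I * α = ((-(π * α / 2) : ℝ) : ℂ) * I by push_cast; ring,
    exp_mul_I, ← ofReal_cos, ← ofReal_sin, Real.cos_neg, Real.sin_neg]
  push_cast
  ring

/-- For `α ∈ (1,2)`, `r ↦ (e^{ir} - 1 - ir) r^{-1-α}` is Lebesgue
integrable on `(0,∞)` and
`∫_0^∞ (e^{ir} - 1 - ir) r^{-1-α} dr = (Γ(2-α)/(α(α-1))) (cos(πα/2) - i sin(πα/2))`. -/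
theorem stmt_10 (α : ℝ) (hα1 : 1 < α) (hα2 : α < 2) :
    IntegrableOn
      (fun r : ℝ => (Complex.exp ((r:ℂ) * Complex.I) - 1 - (r:ℂ) * Complex.I) *
        ((r ^ (-1 - α) : ℝ) : ℂ)) (Set.Ioi (0:ℝ)) ∧
    ∫ r in Set.Ioi (0:ℝ),
        (Complex.exp ((r:ℂ) * Complex.I) - 1 - (r:ℂ) * Complex.I) * ((r ^ (-1 - α) : ℝ) : ℂ) =
      ((Real.Gamma (2 - α) / (α * (α - 1)) : ℝ) : ℂ) *
        ((Real.cos (π * α / 2) : ℂ) - (Real.sin (π * α / 2) : ℂ) * Complex.I) := by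
  refine ⟨integrableOn_cexp_sub_one_sub_mul_rpow hα1 hα2 (by simp), ?_⟩
  have : (𝓝[{c : ℂ | c.re < 0}] I).NeBot :=
    mem_closure_iff_nhdsWithin_neBot.1 (by simp [closure_setOfPred_re_lt])
  have hlhs : Tendsto (fun c : ℂ => Real.Gamma (-α) * (-c) ^ (α : ℂ)) (𝓝[{c : ℂ | c.re < 0}] I)
      (𝓝 (∫ r : ℝ in Ioi 0, (cexp (r * I) - 1 - r * I) * (r ^ (-1 - α) : ℝ))) :=
    ((continuousWithinAt_integral_cexp_sub_one_sub_mul_rpow hα1 hα2 I).mono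
      fun c (hc : c.re < 0) => hc.le).tendsto.congr'
        (eventually_nhdsWithin_of_forall fun _ hc =>
          integral_cexp_sub_one_sub_mul_rpow hα1 hα2 hc)
  have hrhs : Tendsto (fun c : ℂ => Real.Gamma (-α) * (-c) ^ (α : ℂ)) (𝓝[{c : ℂ | c.re < 0}] I)
      (𝓝 (Real.Gamma (-α) * (-I) ^ (α : ℂ))) :=
    (((continuousAt_cpow_const (by simp [mem_slitPlane_iff])).comp
      continuous_neg.continuousAt).tendsto.const_mul _).mono_left nhdsWithin_le_nhds
  rw [tendsto_nhds_unique hlhs hrhs, neg_I_cpow_ofReal,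
    Real.Gamma_two_sub (by linarith) (by linarith), mul_div_cancel_left₀ _ (by nlinarith)]
end

section
/- Let 𝕎 be the space of (a.e.-equivalence classes of) Lebesgue-integrable functions w : ℝ → ℝ vanishing a.e. on (−∞,0), a Borel subset of L¹(ℝ); for λ > 0 and H ∈ ℝ let φ_{λ,H} : 𝕎 → 𝕎 be the map (φ_{λ,H} w)(t) := λ^{H−1} w(t/λ). Let γ > 0, H > 0, and let ν be a σ-finite Borel measure on 𝕎 which is (γ,H)-scaling, i.e. λ^{1+γ} ν(φ_{λ,H}(A)) = ν(A) for every λ > 0 and Borel A ⊆ 𝕎. Write 𝒲(w) := ∫_0^∞ w(t) dt, Ψ(z) := e^{iz} − 1 − iz, and α := (1+γ)/H. If ∫_𝕎 ( |𝒲(w)| ∧ |𝒲(w)|² ) ν(dw) < ∞, then for every θ > 0, ∫_𝕎 Ψ( θ 𝒲(w) ) ν(dw) = θ^α ∫_𝕎 Ψ( 𝒲(w) ) ν(dw), and for every θ < 0, ∫_𝕎 Ψ( θ 𝒲(w) ) ν(dw) = |θ|^α ∫_𝕎 Ψ( −𝒲(w) ) ν(dw). -/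
open MeasureTheory Filter Set
open scoped ENNReal Topology

noncomputable section

/-- Borel σ-algebra on `L¹(ℝ)`. -/
instance : MeasurableSpace (Lp ℝ 1 (volume : Measure ℝ)) := borel _

/-- `𝕎`: the space of (a.e.-equivalence classes of) Lebesgue-integrable functions
`ℝ → ℝ` vanishing a.e. on `(-∞, 0)`, with the Borel σ-algebra inherited from `L¹(ℝ)`. -/
abbrev WW : Type :=
  {w : Lp ℝ 1 (volume : Measure ℝ) // ∀ᵐ t ∂(volume : Measure ℝ), t < 0 → w t = 0}

/-- The scaling map `φ_{λ,H} w (t) = λ^{H-1} w(t/λ)` on `𝕎`. -/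
noncomputable def phi (lam H : ℝ) (w : WW) : WW := by
  classical
  exact if h : MemLp (fun t => lam ^ (H - 1) * (w.1 : ℝ → ℝ) (t / lam)) 1 (volume : Measure ℝ) ∧
      ∀ᵐ t ∂(volume : Measure ℝ), t < 0 → lam ^ (H - 1) * (w.1 : ℝ → ℝ) (t / lam) = 0
  then ⟨h.1.toLp _, by
    filter_upwards [h.1.coeFn_toLp, h.2] with t h1 h2 ht
    rw [h1]; exact h2 ht⟩
  else ⟨0, by
    filter_upwards [Lp.coeFn_zero ℝ 1 (volume : Measure ℝ)] with t h1 _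
    simp [h1]⟩

/-- `ν` is a `(γ,H)`-scaling measure on `𝕎`:
`λ^{1+γ} ν(φ_{λ,H}(A)) = ν(A)` for every `λ > 0` and Borel `A`. -/
def ScalingMeasure (ν : Measure WW) (γ H : ℝ) : Prop :=
  ∀ lam : ℝ, 0 < lam → ∀ A : Set WW, MeasurableSet A →
    ENNReal.ofReal (lam ^ (1 + γ)) * ν (phi lam H '' A) = ν A

/-- `𝒲(w) = ∫_0^∞ w(t) dt`. -/
noncomputable def Wcal (w : WW) : ℝ := ∫ t in Set.Ioi (0:ℝ), (w.1 : ℝ → ℝ) t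

/-- `Ψ(z) = e^{iz} - 1 - iz`. -/
noncomputable def Psi (z : ℝ) : ℂ := Complex.exp ((z:ℂ) * Complex.I) - 1 - (z:ℂ) * Complex.I

end

/-!
The map `φ_{λ,H}` is a measurable bijection of `𝕎` with inverse `φ_{λ⁻¹,H}`, so the scaling
property says exactly that `φ_{λ,H}` pushes `ν` forward to `λ^{1+γ} ν`. Since
`𝒲(φ_{λ,H} w) = λ^H 𝒲(w)`, substituting `w ↦ φ_{λ,H} w` with `λ = c^{1/H}` gives
`∫ g(c 𝒲) dν = c^{(1+γ)/H} ∫ g(𝒲) dν` for every `c > 0` and every integrand `g`;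
take `g = Ψ`, resp. `g = Ψ(-·)` with `c = |θ|`.
-/

instance : BorelSpace (Lp ℝ 1 (volume : Measure ℝ)) := ⟨rfl⟩

namespace Real

theorem map_volume_div_const {c : ℝ} (hc : c ≠ 0) :
    Measure.map (· / c) (volume : Measure ℝ) = ENNReal.ofReal |c| • volume := by
  simp_rw [div_eq_mul_inv]
  rw [map_volume_mul_right (inv_ne_zero hc), inv_inv]

theorem quasiMeasurePreserving_div_const {c : ℝ} (hc : c ≠ 0) :
    Measure.QuasiMeasurePreserving (· / c) (volume : Measure ℝ) volume :=
  ⟨measurable_div_const c, by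
    rw [map_volume_div_const hc]; exact Measure.smul_absolutelyContinuous⟩

end Real

section Dilation

variable {E : Type*} [NormedAddCommGroup E] {f : ℝ → E} {p : ℝ≥0∞} {c : ℝ}

theorem eLpNorm_comp_div_const (hp : p ≠ ∞) (hf : AEStronglyMeasurable f volume) (hc : c ≠ 0) :
    eLpNorm (fun t => f (t / c)) p volume =
      ENNReal.ofReal |c| ^ (1 / p).toReal * eLpNorm f p volume := by
  have hf' : AEStronglyMeasurable f (Measure.map (· / c) volume) := by
    rw [Real.map_volume_div_const hc]; exact hf.smul_measure _
  rw [← Function.comp_def, ← eLpNorm_map_measure hf' (measurable_div_const c).aemeasurable,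
    Real.map_volume_div_const hc, eLpNorm_smul_measure_of_ne_top hp, smul_eq_mul]

theorem MeasureTheory.MemLp.comp_div_const (hf : MemLp f p volume) (hc : c ≠ 0) :
    MemLp (fun t => f (t / c)) p volume := by
  have hf' : MemLp f p (Measure.map (· / c) volume) := by
    rw [Real.map_volume_div_const hc]; exact hf.smul_measure ENNReal.ofReal_ne_top
  exact hf'.comp_of_map (measurable_div_const c).aemeasurable

end Dilation

section Scaling

variable {lam : ℝ} (H : ℝ)

theorem coeFn_phi (hlam : 0 < lam) (w : WW) :
    ((phi lam H w).1 : ℝ → ℝ) =ᵐ[volume] fun t => lam ^ (H - 1) * w.1 (t / lam) := by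
  have hmem : MemLp (fun t => lam ^ (H - 1) * w.1 (t / lam)) 1 volume :=
    ((Lp.memLp w.1).comp_div_const hlam.ne').const_mul _
  have hvanish : ∀ᵐ t ∂volume, t < 0 → lam ^ (H - 1) * w.1 (t / lam) = 0 := by
    filter_upwards [(Real.quasiMeasurePreserving_div_const hlam.ne').ae w.2] with t ht hneg
    rw [ht (div_neg_of_neg_of_pos hneg hlam), mul_zero]
  rw [phi, dif_pos ⟨hmem, hvanish⟩]
  exact hmem.coeFn_toLp

theorem phi_inv_phi (hlam : 0 < lam) (w : WW) : phi lam⁻¹ H (phi lam H w) = w := by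
  refine Subtype.ext (Lp.ext ?_)
  filter_upwards [coeFn_phi H (inv_pos.2 hlam) (phi lam H w),
    (Real.quasiMeasurePreserving_div_const (inv_ne_zero hlam.ne')).ae_eq (coeFn_phi H hlam w)]
    with t h₁ h₂
  simp only [Function.comp_apply] at h₂
  rw [h₁, h₂, div_div, inv_mul_cancel₀ hlam.ne', div_one, ← mul_assoc,
    ← Real.mul_rpow (inv_pos.2 hlam).le hlam.le, inv_mul_cancel₀ hlam.ne', Real.one_rpow, one_mul]

theorem lipschitzWith_phi (hlam : 0 < lam) :
    LipschitzWith (Real.toNNReal (lam ^ H)) (phi lam H) := by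
  intro v w
  change edist (phi lam H v).1 (phi lam H w).1 ≤ _ * edist v.1 w.1
  rw [Lp.edist_def, Lp.edist_def]
  have hsub : ⇑(phi lam H v).1 - ⇑(phi lam H w).1 =ᵐ[volume]
      lam ^ (H - 1) • fun t => (⇑v.1 - ⇑w.1) (t / lam) := by
    filter_upwards [coeFn_phi H hlam v, coeFn_phi H hlam w] with t hv hw
    simp only [Pi.sub_apply, Pi.smul_apply, hv, hw, smul_eq_mul, mul_sub]
  rw [eLpNorm_congr_ae hsub, eLpNorm_const_smul, eLpNorm_comp_div_const ENNReal.one_ne_top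
    ((Lp.aestronglyMeasurable v.1).sub (Lp.aestronglyMeasurable w.1)) hlam.ne']
  refine le_of_eq ?_
  rw [← mul_assoc, abs_of_pos hlam, div_one, ENNReal.toReal_one, ENNReal.rpow_one,
    Real.enorm_eq_ofReal (Real.rpow_nonneg hlam.le _),
    ← ENNReal.ofReal_mul (Real.rpow_nonneg hlam.le _), ← Real.rpow_add_one hlam.ne', sub_add_cancel]
  rfl

theorem phi_phi_inv (hlam : 0 < lam) (w : WW) : phi lam H (phi lam⁻¹ H w) = w := by
  simpa only [inv_inv] using phi_inv_phi H (inv_pos.2 hlam) w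

theorem measurable_phi (hlam : 0 < lam) : Measurable (phi lam H) :=
  (lipschitzWith_phi H hlam).continuous.measurable

noncomputable def phiEquiv (hlam : 0 < lam) : WW ≃ᵐ WW where
  toFun := phi lam H
  invFun := phi lam⁻¹ H
  left_inv := phi_inv_phi H hlam
  right_inv := phi_phi_inv H hlam
  measurable_toFun := measurable_phi H hlam
  measurable_invFun := measurable_phi H (inv_pos.2 hlam)

theorem Wcal_eq_integral (w : WW) : Wcal w = ∫ t, w.1 t := by
  refine setIntegral_eq_integral_of_ae_compl_eq_zero ?_
  filter_upwards [w.2, Measure.ae_ne volume (0 : ℝ)] with t ht hne hnot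
  exact ht (lt_of_le_of_ne (not_lt.1 hnot) hne)

theorem Wcal_phi (hlam : 0 < lam) (w : WW) : Wcal (phi lam H w) = lam ^ H * Wcal w := by
  rw [Wcal_eq_integral, Wcal_eq_integral, integral_congr_ae (coeFn_phi H hlam w),
    integral_const_mul, Measure.integral_comp_div (fun t => w.1 t) lam, abs_of_pos hlam,
    smul_eq_mul, ← mul_assoc, ← Real.rpow_add_one hlam.ne', sub_add_cancel]

end Scaling

namespace ScalingMeasure

variable {ν : Measure WW} {γ H : ℝ} {lam : ℝ}

theorem map_phi (hscal : ScalingMeasure ν γ H) (hlam : 0 < lam) :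
    ν.map (phi lam H) = ENNReal.ofReal (lam ^ (1 + γ)) • ν := by
  ext A hA
  have hscal' := hscal lam⁻¹ (inv_pos.2 hlam) A hA
  change (ν.map (phiEquiv H hlam)) A = _
  rw [MeasurableEquiv.map_apply, ← MeasurableEquiv.image_symm, Measure.smul_apply, smul_eq_mul,
    ← hscal', ← mul_assoc, ← ENNReal.ofReal_mul (Real.rpow_nonneg hlam.le _),
    ← Real.mul_rpow hlam.le (inv_pos.2 hlam).le, mul_inv_cancel₀ hlam.ne', Real.one_rpow,
    ENNReal.ofReal_one, one_mul]
  rfl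

theorem integral_comp_phi {E : Type*} [NormedAddCommGroup E] [NormedSpace ℝ E]
    (hscal : ScalingMeasure ν γ H) (hlam : 0 < lam) (g : WW → E) :
    ∫ w, g (phi lam H w) ∂ν = lam ^ (1 + γ) • ∫ w, g w ∂ν := by
  change ∫ w, g (phiEquiv H hlam w) ∂ν = _
  rw [← integral_map_equiv, show ⇑(phiEquiv H hlam) = phi lam H from rfl,
    hscal.map_phi hlam, integral_smul_measure, ENNReal.toReal_ofReal (Real.rpow_nonneg hlam.le _)]

theorem integral_comp_mul_Wcal {E : Type*} [NormedAddCommGroup E] [NormedSpace ℝ E]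
    (hscal : ScalingMeasure ν γ H) (hH : H ≠ 0) {c : ℝ} (hc : 0 < c) (g : ℝ → E) :
    ∫ w, g (c * Wcal w) ∂ν = c ^ ((1 + γ) / H) • ∫ w, g (Wcal w) ∂ν := by
  have hlam : 0 < c ^ H⁻¹ := Real.rpow_pos_of_pos hc _
  have hWcal (w : WW) : c * Wcal w = Wcal (phi (c ^ H⁻¹) H w) := by
    rw [Wcal_phi H hlam, ← Real.rpow_mul hc.le, inv_mul_cancel₀ hH, Real.rpow_one]
  simp_rw [hWcal]
  rw [hscal.integral_comp_phi hlam (fun w => g (Wcal w)), ← Real.rpow_mul hc.le,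
    ← div_eq_inv_mul]

end ScalingMeasure

theorem stmt_12_general (γ H : ℝ) (hH : 0 < H)
    (ν : Measure WW) (hscal : ScalingMeasure ν γ H) :
    (∀ θ : ℝ, 0 < θ →
      ∫ w, Psi (θ * Wcal w) ∂ν =
        ((θ ^ ((1 + γ) / H) : ℝ) : ℂ) * ∫ w, Psi (Wcal w) ∂ν) ∧
    (∀ θ : ℝ, θ < 0 →
      ∫ w, Psi (θ * Wcal w) ∂ν =
        ((|θ| ^ ((1 + γ) / H) : ℝ) : ℂ) * ∫ w, Psi (-Wcal w) ∂ν) := by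
  refine ⟨fun θ hθ => ?_, fun θ hθ => ?_⟩
  · rw [hscal.integral_comp_mul_Wcal hH.ne' hθ Psi, Complex.real_smul]
  · have hneg (w : WW) : θ * Wcal w = -(|θ| * Wcal w) := by rw [abs_of_neg hθ]; ring
    simp_rw [hneg]
    rw [hscal.integral_comp_mul_Wcal hH.ne' (abs_pos.2 hθ.ne) (fun z => Psi (-z)),
      Complex.real_smul]

/-- stability scaling of the characteristic exponent. If `ν` is a
`(γ,H)`-scaling σ-finite measure on `𝕎` with `γ, H > 0`,
`∫ (|𝒲| ∧ |𝒲|²) dν < ∞` and `α = (1+γ)/H`, then for `θ > 0`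
`∫ Ψ(θ𝒲(w)) ν(dw) = θ^α ∫ Ψ(𝒲(w)) ν(dw)` and for `θ < 0`
`∫ Ψ(θ𝒲(w)) ν(dw) = |θ|^α ∫ Ψ(-𝒲(w)) ν(dw)`. -/
theorem stmt_12 (γ H : ℝ) (hγ : 0 < γ) (hH : 0 < H)
    (ν : Measure WW) [SigmaFinite ν] (hscal : ScalingMeasure ν γ H)
    (hint : ∫⁻ w, ENNReal.ofReal (min |Wcal w| (|Wcal w| ^ 2)) ∂ν ≠ ⊤) :
    (∀ θ : ℝ, 0 < θ →
      ∫ w, Psi (θ * Wcal w) ∂ν =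
        ((θ ^ ((1 + γ) / H) : ℝ) : ℂ) * ∫ w, Psi (Wcal w) ∂ν) ∧
    (∀ θ : ℝ, θ < 0 →
      ∫ w, Psi (θ * Wcal w) ∂ν =
        ((|θ| ^ ((1 + γ) / H) : ℝ) : ℂ) * ∫ w, Psi (-Wcal w) ∂ν) :=
  stmt_12_general γ H hH ν hscal
end
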